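/- arXiv:2210.10404 — 8 statements merged into one kernel-verified Lean document; each statement's English description precedes it below -/
import Mathlib

section
/- Let x: ℝ → ℝⁿ be a T-periodic differentiable function with values in (0,1)ⁿ satisfying the ribosome flow model equations ẋᵢ = u_{i-1} x_{i-1}(1 - xᵢ) - uᵢ xᵢ(1 - x_{i+1}) for i = 1,…,n (with x₀ ≡ 1, x_{n+1} ≡ 0), where the uᵢ: ℝ → ℝ are continuous, positive, and T-periodic. Let e ∈ (0,1)ⁿ satisfy the equilibrium equations ū_{i-1} e_{i-1}(1 - eᵢ) = ūᵢ eᵢ(1 - e_{i+1}) (with e₀ = 1, e_{n+1} = 0), where ūᵢ = (1/T)∫₀ᵀ uᵢ(t)dt. Setting zᵢ(t) = xᵢ(t) - eᵢ, then (1/T)∫₀ᵀ u₀(t) z₁(t) dt = -(1/T)∫₀ᵀ u_n(t) z_n(t) dt. -/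
/-!
Summing the RFM equations over the sites, the internal fluxes telescope: the total occupancy
`∑ xᵢ` changes at rate `u₀ (1 - x₁) - uₙ xₙ`, inflow minus outflow. Integrating over a period,
periodicity of `x` makes the integrals of inflow and outflow equal. On the other hand, the
equilibrium equations say that the averaged flux `ūᵢ eᵢ (1 - eᵢ₊₁)` is the same at every site,
so `ū₀ (1 - e₁) = ūₙ eₙ`. Subtracting the two identities gives the claim.
-/

open MeasureTheory intervalIntegral Real Filter

theorem eq_of_forall_pred_eq {α : Type*} {F : ℕ → α} {n : ℕ}
    (h : ∀ i, 1 ≤ i → i ≤ n → F (i - 1) = F i) : F 0 = F n := by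
  induction n with
  | zero => rfl
  | succ k ih =>
    rw [ih fun i hi₁ hi₂ => h i hi₁ (by omega)]
    exact h (k + 1) (by omega) le_rfl

theorem hasDerivAt_sum_of_deriv_eq_sub {x φ : ℕ → ℝ → ℝ} {n : ℕ}
    (hdiff : ∀ i, 1 ≤ i → i ≤ n → Differentiable ℝ (x i))
    (hderiv : ∀ i, 1 ≤ i → i ≤ n → ∀ t, deriv (x i) t = φ (i - 1) t - φ i t) (t : ℝ) :
    HasDerivAt (fun s => ∑ i ∈ Finset.range n, x (i + 1) s) (φ 0 t - φ n t) t := by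
  have hsum : ∑ i ∈ Finset.range n, deriv (x (i + 1)) t = φ 0 t - φ n t := by
    rw [← Finset.sum_range_sub' (fun i => φ i t)]
    refine Finset.sum_congr rfl fun i hi => ?_
    simpa using hderiv (i + 1) (by omega) (by simp at hi; omega) t
  rw [← hsum]
  exact HasDerivAt.fun_sum fun i hi =>
    (hdiff (i + 1) (by omega) (by simp at hi; omega) t).hasDerivAt

theorem continuous_of_le_succ {x : ℕ → ℝ → ℝ} {n : ℕ}
    (hx0 : ∀ t, x 0 t = 1) (hxtop : ∀ t, x (n + 1) t = 0)
    (hxdiff : ∀ i, 1 ≤ i → i ≤ n → Differentiable ℝ (x i)) (i : ℕ) (hi : i ≤ n + 1) :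
    Continuous (x i) := by
  rcases Nat.eq_zero_or_pos i with rfl | hi₀
  · simpa [funext hx0] using continuous_const
  rcases hi.eq_or_lt with rfl | hin
  · simpa [funext hxtop] using continuous_const
  exact (hxdiff i hi₀ (by omega)).continuous

theorem rfm_integral_inflow_sub_outflow_eq_zero {n : ℕ} {T : ℝ} {u x : ℕ → ℝ → ℝ}
    (hx0 : ∀ t, x 0 t = 1) (hxtop : ∀ t, x (n + 1) t = 0)
    (hxdiff : ∀ i, 1 ≤ i → i ≤ n → Differentiable ℝ (x i))
    (hxper : ∀ i, 1 ≤ i → i ≤ n → ∀ t, x i (t + T) = x i t)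
    (hode : ∀ i, 1 ≤ i → i ≤ n → ∀ t,
      deriv (x i) t
        = u (i - 1) t * x (i - 1) t * (1 - x i t) - u i t * x i t * (1 - x (i + 1) t))
    (hcont : Continuous fun t => u 0 t * (1 - x 1 t) - u n t * x n t) :
    ∫ t in (0:ℝ)..T, (u 0 t * (1 - x 1 t) - u n t * x n t) = 0 := by
  have hderiv (t : ℝ) : HasDerivAt (fun s => ∑ i ∈ Finset.range n, x (i + 1) s)
      (u 0 t * (1 - x 1 t) - u n t * x n t) t := by
    simpa [hx0, hxtop] using hasDerivAt_sum_of_deriv_eq_sub (φ := fun i t =>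
      u i t * x i t * (1 - x (i + 1) t)) hxdiff (fun i hi₁ hi₂ t => by
        simpa [Nat.sub_add_cancel hi₁] using hode i hi₁ hi₂ t) t
  rw [integral_eq_sub_of_hasDerivAt (fun t _ => hderiv t) (hcont.intervalIntegrable 0 T),
    sub_eq_zero]
  refine Finset.sum_congr rfl fun i hi => ?_
  simpa using hxper (i + 1) (by omega) (by simp at hi; omega) 0

theorem rfm_eta01_eq_neg_etann_general
    (n : ℕ) (T : ℝ)
    (u : ℕ → ℝ → ℝ) (x : ℕ → ℝ → ℝ) (e : ℕ → ℝ)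
    (hu_cont : ∀ i, i ≤ n → Continuous (u i))
    (hx0 : ∀ t, x 0 t = 1) (hxtop : ∀ t, x (n+1) t = 0)
    (hxdiff : ∀ i, 1 ≤ i → i ≤ n → Differentiable ℝ (x i))
    (hxper : ∀ i, 1 ≤ i → i ≤ n → ∀ t, x i (t + T) = x i t)
    (hode : ∀ i, 1 ≤ i → i ≤ n → ∀ t,
      deriv (x i) t
        = u (i-1) t * x (i-1) t * (1 - x i t) - u i t * x i t * (1 - x (i+1) t))
    (he0 : e 0 = 1) (hetop : e (n+1) = 0)
    (heq : ∀ i, 1 ≤ i → i ≤ n →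
      (1/T * ∫ t in (0:ℝ)..T, u (i-1) t) * e (i-1) * (1 - e i)
        = (1/T * ∫ t in (0:ℝ)..T, u i t) * e i * (1 - e (i+1))) :
    (1/T * ∫ t in (0:ℝ)..T, u 0 t * (x 1 t - e 1))
      = -(1/T * ∫ t in (0:ℝ)..T, u n t * (x n t - e n)) := by
  have hu₀ := hu_cont 0 n.zero_le
  have huₙ := hu_cont n le_rfl
  have hx₁ := continuous_of_le_succ hx0 hxtop hxdiff 1 (by omega)
  have hxₙ := continuous_of_le_succ hx0 hxtop hxdiff n (by omega)
  have hflux := eq_of_forall_pred_eq (F := fun i =>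
    (1/T * ∫ t in (0:ℝ)..T, u i t) * e i * (1 - e (i + 1)))
    fun i hi₁ hi₂ => by simpa [Nat.sub_add_cancel hi₁] using heq i hi₁ hi₂
  simp only [he0, hetop] at hflux
  have hbalance := rfm_integral_inflow_sub_outflow_eq_zero hx0 hxtop hxdiff hxper hode
    (by fun_prop)
  have hsplit : (∫ t in (0:ℝ)..T, u 0 t * (x 1 t - e 1)) + ∫ t in (0:ℝ)..T, u n t * (x n t - e n)
      = (1 - e 1) * (∫ t in (0:ℝ)..T, u 0 t) - e n * (∫ t in (0:ℝ)..T, u n t)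
        - ∫ t in (0:ℝ)..T, (u 0 t * (1 - x 1 t) - u n t * x n t) := by
    have hint {f : ℝ → ℝ} (hf : Continuous f) : IntervalIntegrable f volume 0 T :=
      hf.intervalIntegrable 0 T
    rw [← intervalIntegral.integral_add (hint (by fun_prop)) (hint (by fun_prop)),
      ← intervalIntegral.integral_const_mul, ← intervalIntegral.integral_const_mul,
      ← intervalIntegral.integral_sub (hint (by fun_prop)) (hint (by fun_prop)),
      ← intervalIntegral.integral_sub (hint (by fun_prop)) (hint (by fun_prop))]
    congr 1; ext t; ring
  linear_combination (1/T) * hsplit + hflux - (1/T) * hbalance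

theorem rfm_eta01_eq_neg_etann
    (n : ℕ) (hn : 1 ≤ n) (T : ℝ) (hT : 0 < T)
    (u : ℕ → ℝ → ℝ) (x : ℕ → ℝ → ℝ) (e : ℕ → ℝ)
    (hu_cont : ∀ i, i ≤ n → Continuous (u i))
    (hu_pos : ∀ i, i ≤ n → ∀ t, 0 < u i t)
    (hu_per : ∀ i, i ≤ n → ∀ t, u i (t + T) = u i t)
    (hx0 : ∀ t, x 0 t = 1) (hxtop : ∀ t, x (n+1) t = 0)
    (hxdiff : ∀ i, 1 ≤ i → i ≤ n → Differentiable ℝ (x i))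
    (hxper : ∀ i, 1 ≤ i → i ≤ n → ∀ t, x i (t + T) = x i t)
    (hxmem : ∀ i, 1 ≤ i → i ≤ n → ∀ t, x i t ∈ Set.Ioo (0:ℝ) 1)
    (hode : ∀ i, 1 ≤ i → i ≤ n → ∀ t,
      deriv (x i) t
        = u (i-1) t * x (i-1) t * (1 - x i t) - u i t * x i t * (1 - x (i+1) t))
    (he0 : e 0 = 1) (hetop : e (n+1) = 0)
    (hemem : ∀ i, 1 ≤ i → i ≤ n → e i ∈ Set.Ioo (0:ℝ) 1)
    (heq : ∀ i, 1 ≤ i → i ≤ n →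
      (1/T * ∫ t in (0:ℝ)..T, u (i-1) t) * e (i-1) * (1 - e i)
        = (1/T * ∫ t in (0:ℝ)..T, u i t) * e i * (1 - e (i+1))) :
    (1/T * ∫ t in (0:ℝ)..T, u 0 t * (x 1 t - e 1))
      = -(1/T * ∫ t in (0:ℝ)..T, u n t * (x n t - e n)) :=
  rfm_eta01_eq_neg_etann_general n T u x e hu_cont hx0 hxtop hxdiff hxper hode he0 hetop heq
end

section
/- Under the hypotheses of the RFM with a T-periodic solution x and equilibrium e of the averaged system (as above), define the average periodic production rate R_P = (1/T)∫₀ᵀ u_n(t) x_n(t) dt and the constant production rate R_C = ū_n e_n. Then R_P = R_C - (1/T)∫₀ᵀ u₀(t)(x₁(t) - e₁) dt. In particular, if ∫₀ᵀ u₀(t)(x₁(t) - e₁) dt ≥ 0 then R_P ≤ R_C. -/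
/-!
Write `Fᵢ = uᵢ xᵢ (1 - xᵢ₊₁)` for the flux from site `i` to site `i + 1`, so that `ẋᵢ = Fᵢ₋₁ - Fᵢ`.
Integrating over a period kills the left-hand side, hence all fluxes have the same integral over
`[0, T]`; in particular `∫ uₙ xₙ = ∫ u₀ (1 - x₁)`. The same telescoping applied to the averaged
equilibrium gives `ūₙ eₙ = ū₀ (1 - e₁)`, and subtracting the two yields the formula for `R_P`.
-/

open MeasureTheory intervalIntegral

theorem eq_of_forall_lt_eq_succ {α : Type*} {a : ℕ → α} {n : ℕ}
    (h : ∀ i < n, a i = a (i + 1)) : a 0 = a n := by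
  induction n with
  | zero => rfl
  | succ m ih => exact (ih fun i hi => h i (hi.trans m.lt_succ_self)).trans (h m m.lt_succ_self)

theorem intervalIntegral.integral_eq_integral_of_deriv_eq_sub {f g h : ℝ → ℝ} {a b : ℝ}
    (hf : ∀ t ∈ Set.uIcc a b, DifferentiableAt ℝ f t)
    (hderiv : ∀ t ∈ Set.uIcc a b, deriv f t = g t - h t)
    (hg : IntervalIntegrable g volume a b) (hh : IntervalIntegrable h volume a b)
    (hfab : f a = f b) :
    ∫ t in a..b, g t = ∫ t in a..b, h t := by
  have hftc := integral_eq_sub_of_hasDerivAt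
    (fun t ht => hderiv t ht ▸ (hf t ht).hasDerivAt) (hg.sub hh)
  rw [integral_sub hg hh, hfab, sub_self] at hftc
  exact sub_eq_zero.mp hftc

namespace RFM

def flux (u x : ℕ → ℝ → ℝ) (i : ℕ) (t : ℝ) : ℝ := u i t * x i t * (1 - x (i + 1) t)

variable {n : ℕ} {T : ℝ} {u x : ℕ → ℝ → ℝ}

theorem continuous_occupancy (hx0 : ∀ t, x 0 t = 1) (hxtop : ∀ t, x (n+1) t = 0)
    (hxdiff : ∀ i, 1 ≤ i → i ≤ n → Differentiable ℝ (x i)) :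
    ∀ j ≤ n + 1, Continuous (x j) := by
  intro j hj
  rcases Nat.eq_zero_or_pos j with rfl | hpos
  · exact continuous_const.congr fun t => (hx0 t).symm
  rcases hj.eq_or_lt with rfl | hlt
  · exact continuous_const.congr fun t => (hxtop t).symm
  · exact (hxdiff j hpos (Nat.lt_succ_iff.mp hlt)).continuous

theorem integral_flux_zero_eq_integral_flux
    (hu_cont : ∀ i, i ≤ n → Continuous (u i))
    (hx_cont : ∀ j ≤ n + 1, Continuous (x j))
    (hxdiff : ∀ i, 1 ≤ i → i ≤ n → Differentiable ℝ (x i))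
    (hxper : ∀ i, 1 ≤ i → i ≤ n → ∀ t, x i (t + T) = x i t)
    (hode : ∀ i, 1 ≤ i → i ≤ n → ∀ t,
      deriv (x i) t
        = u (i-1) t * x (i-1) t * (1 - x i t) - u i t * x i t * (1 - x (i+1) t)) :
    ∫ t in (0:ℝ)..T, flux u x 0 t = ∫ t in (0:ℝ)..T, flux u x n t := by
  have hflux_int : ∀ i ≤ n, IntervalIntegrable (flux u x i) volume 0 T := fun i hi =>
    (((hu_cont i hi).mul (hx_cont i (hi.trans n.le_succ))).mul
      (continuous_const.sub (hx_cont (i + 1) (Nat.succ_le_succ hi)))).intervalIntegrable 0 T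
  refine eq_of_forall_lt_eq_succ (a := fun i => ∫ t in (0:ℝ)..T, flux u x i t) fun i hi => ?_
  refine integral_eq_integral_of_deriv_eq_sub
    (fun t _ => hxdiff (i + 1) i.succ_pos hi t) (fun t _ => ?_)
    (hflux_int i hi.le) (hflux_int (i + 1) hi)
    (by simpa using (hxper (i + 1) i.succ_pos hi 0).symm)
  simpa only [flux, Nat.add_sub_cancel] using hode (i + 1) i.succ_pos hi t

theorem inflow_eq_outflow_of_balance {c e : ℕ → ℝ} (he0 : e 0 = 1) (hetop : e (n+1) = 0)
    (hbal : ∀ i, 1 ≤ i → i ≤ n → c (i-1) * e (i-1) * (1 - e i) = c i * e i * (1 - e (i+1))) :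
    c 0 * (1 - e 1) = c n * e n := by
  have hchain := eq_of_forall_lt_eq_succ (a := fun i => c i * e i * (1 - e (i + 1)))
    fun i hi => by simpa only [Nat.add_sub_cancel] using hbal (i + 1) i.succ_pos hi
  simpa only [he0, hetop, mul_one, sub_zero] using hchain

end RFM

theorem rfm_RP_formula_and_no_goe_general
    (n : ℕ) (T : ℝ) (hT : 0 < T)
    (u : ℕ → ℝ → ℝ) (x : ℕ → ℝ → ℝ) (e : ℕ → ℝ)
    (hu_cont : ∀ i, i ≤ n → Continuous (u i))
    (hx0 : ∀ t, x 0 t = 1) (hxtop : ∀ t, x (n+1) t = 0)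
    (hxdiff : ∀ i, 1 ≤ i → i ≤ n → Differentiable ℝ (x i))
    (hxper : ∀ i, 1 ≤ i → i ≤ n → ∀ t, x i (t + T) = x i t)
    (hode : ∀ i, 1 ≤ i → i ≤ n → ∀ t,
      deriv (x i) t
        = u (i-1) t * x (i-1) t * (1 - x i t) - u i t * x i t * (1 - x (i+1) t))
    (he0 : e 0 = 1) (hetop : e (n+1) = 0)
    (heq : ∀ i, 1 ≤ i → i ≤ n →
      (1/T * ∫ t in (0:ℝ)..T, u (i-1) t) * e (i-1) * (1 - e i)
        = (1/T * ∫ t in (0:ℝ)..T, u i t) * e i * (1 - e (i+1))) :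
    (1/T * ∫ t in (0:ℝ)..T, u n t * x n t)
      = (1/T * ∫ t in (0:ℝ)..T, u n t) * e n - (1/T * ∫ t in (0:ℝ)..T, u 0 t * (x 1 t - e 1))
    ∧ ((0 ≤ ∫ t in (0:ℝ)..T, u 0 t * (x 1 t - e 1)) →
        1/T * ∫ t in (0:ℝ)..T, u n t * x n t ≤ (1/T * ∫ t in (0:ℝ)..T, u n t) * e n) := by
  have hx_cont := RFM.continuous_occupancy hx0 hxtop hxdiff
  have hflux := RFM.integral_flux_zero_eq_integral_flux hu_cont hx_cont hxdiff hxper hode (T := T)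
  have hequil := RFM.inflow_eq_outflow_of_balance
    (c := fun i => 1/T * ∫ t in (0:ℝ)..T, u i t) he0 hetop heq
  have hlast : ∫ t in (0:ℝ)..T, RFM.flux u x n t = ∫ t in (0:ℝ)..T, u n t * x n t := by
    simp [RFM.flux, hxtop]
  have hfirst : ∫ t in (0:ℝ)..T, RFM.flux u x 0 t
      = (1 - e 1) * (∫ t in (0:ℝ)..T, u 0 t) - ∫ t in (0:ℝ)..T, u 0 t * (x 1 t - e 1) := by
    have hu0 := (hu_cont 0 n.zero_le).intervalIntegrable (μ := volume) 0 T
    rw [← intervalIntegral.integral_const_mul, ← integral_sub (hu0.const_mul _)]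
    · refine integral_congr fun t _ => ?_
      simp only [RFM.flux, hx0]
      ring
    · exact ((hu_cont 0 n.zero_le).mul ((hx_cont 1 n.succ_pos).sub continuous_const)).intervalIntegrable 0 T
  have hRP : (1/T * ∫ t in (0:ℝ)..T, u n t * x n t)
      = (1/T * ∫ t in (0:ℝ)..T, u n t) * e n
        - (1/T * ∫ t in (0:ℝ)..T, u 0 t * (x 1 t - e 1)) := by
    rw [← hlast, ← hflux, hfirst, ← hequil]
    ring
  refine ⟨hRP, fun hgain => ?_⟩
  rw [hRP]
  linarith [mul_nonneg (one_div_pos.mpr hT).le hgain]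

theorem rfm_RP_formula_and_no_goe
    (n : ℕ) (hn : 1 ≤ n) (T : ℝ) (hT : 0 < T)
    (u : ℕ → ℝ → ℝ) (x : ℕ → ℝ → ℝ) (e : ℕ → ℝ)
    (hu_cont : ∀ i, i ≤ n → Continuous (u i))
    (hu_pos : ∀ i, i ≤ n → ∀ t, 0 < u i t)
    (hu_per : ∀ i, i ≤ n → ∀ t, u i (t + T) = u i t)
    (hx0 : ∀ t, x 0 t = 1) (hxtop : ∀ t, x (n+1) t = 0)
    (hxdiff : ∀ i, 1 ≤ i → i ≤ n → Differentiable ℝ (x i))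
    (hxper : ∀ i, 1 ≤ i → i ≤ n → ∀ t, x i (t + T) = x i t)
    (hxmem : ∀ i, 1 ≤ i → i ≤ n → ∀ t, x i t ∈ Set.Ioo (0:ℝ) 1)
    (hode : ∀ i, 1 ≤ i → i ≤ n → ∀ t,
      deriv (x i) t
        = u (i-1) t * x (i-1) t * (1 - x i t) - u i t * x i t * (1 - x (i+1) t))
    (he0 : e 0 = 1) (hetop : e (n+1) = 0)
    (hemem : ∀ i, 1 ≤ i → i ≤ n → e i ∈ Set.Ioo (0:ℝ) 1)
    (heq : ∀ i, 1 ≤ i → i ≤ n →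
      (1/T * ∫ t in (0:ℝ)..T, u (i-1) t) * e (i-1) * (1 - e i)
        = (1/T * ∫ t in (0:ℝ)..T, u i t) * e i * (1 - e (i+1))) :
    (1/T * ∫ t in (0:ℝ)..T, u n t * x n t)
      = (1/T * ∫ t in (0:ℝ)..T, u n t) * e n - (1/T * ∫ t in (0:ℝ)..T, u 0 t * (x 1 t - e 1))
    ∧ ((0 ≤ ∫ t in (0:ℝ)..T, u 0 t * (x 1 t - e 1)) →
        1/T * ∫ t in (0:ℝ)..T, u n t * x n t ≤ (1/T * ∫ t in (0:ℝ)..T, u n t) * e n) :=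
  rfm_RP_formula_and_no_goe_general n T hT u x e hu_cont hx0 hxtop hxdiff hxper hode he0 hetop heq
end

section
/- Under the hypotheses of the RFM with T-periodic solution x and averaged equilibrium e, set zᵢ = xᵢ - eᵢ and define the moments η_{i,j} = (1/T)∫₀ᵀ uᵢ zⱼ dt and η_{i,j,k} = (1/T)∫₀ᵀ uᵢ zⱼ z_k dt (with z₀ ≡ z_{n+1} ≡ 0). Then for every i ∈ {0,1,…,n}: η_{i,i,i+1} = η_{0,1} + η_{i,i}(1 - e_{i+1}) - η_{i,i+1} eᵢ. -/
/-!
Write `Fᵢ = uᵢ xᵢ (1 - xᵢ₊₁)` for the flux through site `i`. Since `ẋᵢ = Fᵢ₋₁ - Fᵢ` and `xᵢ` is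
periodic, all fluxes have the same mean over a period; likewise, by the equilibrium equations, all
`ūᵢ eᵢ (1 - eᵢ₊₁)` are equal. Expanding `xᵢ (1 - xᵢ₊₁)` around `eᵢ (1 - eᵢ₊₁)` therefore shows that
`(1 - eᵢ₊₁) ηᵢ,ᵢ - eᵢ ηᵢ,ᵢ₊₁ - ηᵢ,ᵢ,ᵢ₊₁` does not depend on `i`, and at `i = 0`, where `z₀ = 0`, it
equals `-η₀,₁`.
-/

open MeasureTheory intervalIntegral Real Filter

theorem eq_apply_zero_of_pred_eq {α : Type*} {a : ℕ → α} {n : ℕ}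
    (h : ∀ i, 1 ≤ i → i ≤ n → a (i - 1) = a i) : ∀ i, i ≤ n → a i = a 0 := by
  intro i
  induction i with
  | zero => intro _; rfl
  | succ k ih =>
    intro hk
    rw [← ih (by omega), ← h (k + 1) (by omega) hk, Nat.add_sub_cancel]

theorem integral_eq_integral_of_deriv_eq_sub {x F G : ℝ → ℝ} {a b : ℝ}
    (hx : Differentiable ℝ x) (hxab : x a = x b) (hF : Continuous F) (hG : Continuous G)
    (hderiv : ∀ t, deriv x t = F t - G t) :
    ∫ t in a..b, F t = ∫ t in a..b, G t := by
  have hFG : ∫ t in a..b, (F t - G t) = x b - x a :=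
    integral_eq_sub_of_hasDerivAt (fun t _ => hderiv t ▸ (hx t).hasDerivAt)
      ((hF.sub hG).intervalIntegrable a b)
  rwa [integral_sub (hF.intervalIntegrable a b) (hG.intervalIntegrable a b), hxab, sub_self,
    sub_eq_zero] at hFG

theorem integral_mul_mul_one_sub_eq {u x y : ℝ → ℝ} (hu : Continuous u) (hx : Continuous x)
    (hy : Continuous y) (p q a b : ℝ) :
    ∫ t in a..b, u t * x t * (1 - y t)
      = (∫ t in a..b, u t) * p * (1 - q) + (∫ t in a..b, u t * (x t - p)) * (1 - q)
        - (∫ t in a..b, u t * (y t - q)) * p - ∫ t in a..b, u t * (x t - p) * (y t - q) := by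
  have hexpand : ∀ t, u t * x t * (1 - y t)
      = u t * (p * (1 - q)) + u t * (x t - p) * (1 - q) - u t * (y t - q) * p
        - u t * (x t - p) * (y t - q) := fun t => by ring
  simp_rw [hexpand]
  rw [intervalIntegral.integral_sub, intervalIntegral.integral_sub, intervalIntegral.integral_add,
    intervalIntegral.integral_mul_const, intervalIntegral.integral_mul_const,
    intervalIntegral.integral_mul_const, mul_assoc]
  all_goals apply Continuous.intervalIntegrable; fun_prop

theorem rfm_third_order_moments_general
    (n : ℕ) (T : ℝ)
    (u : ℕ → ℝ → ℝ) (x : ℕ → ℝ → ℝ) (e : ℕ → ℝ)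
    (hu_cont : ∀ i, i ≤ n → Continuous (u i))
    (hx0 : ∀ t, x 0 t = 1) (hxtop : ∀ t, x (n+1) t = 0)
    (hxdiff : ∀ i, 1 ≤ i → i ≤ n → Differentiable ℝ (x i))
    (hxper : ∀ i, 1 ≤ i → i ≤ n → ∀ t, x i (t + T) = x i t)
    (hode : ∀ i, 1 ≤ i → i ≤ n → ∀ t,
      deriv (x i) t
        = u (i-1) t * x (i-1) t * (1 - x i t) - u i t * x i t * (1 - x (i+1) t))
    (he0 : e 0 = 1)
    (heq : ∀ i, 1 ≤ i → i ≤ n →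
      (1/T * ∫ t in (0:ℝ)..T, u (i-1) t) * e (i-1) * (1 - e i)
        = (1/T * ∫ t in (0:ℝ)..T, u i t) * e i * (1 - e (i+1))) :
    ∀ i, i ≤ n →
      (1/T * ∫ t in (0:ℝ)..T, u i t * (x i t - e i) * (x (i+1) t - e (i+1)))
        = (1/T * ∫ t in (0:ℝ)..T, u 0 t * (x 1 t - e 1))
          + (1/T * ∫ t in (0:ℝ)..T, u i t * (x i t - e i)) * (1 - e (i+1))
          - (1/T * ∫ t in (0:ℝ)..T, u i t * (x (i+1) t - e (i+1))) * e i := by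
  have hx_cont : ∀ i, i ≤ n + 1 → Continuous (x i) := by
    intro i hi
    rcases Nat.eq_zero_or_pos i with rfl | hpos
    · simpa only [funext hx0] using continuous_const
    rcases hi.lt_or_eq with hlt | rfl
    · exact (hxdiff i hpos (by omega)).continuous
    · simpa only [funext hxtop] using continuous_const
  have hF_cont : ∀ i, i ≤ n → Continuous fun t => u i t * x i t * (1 - x (i+1) t) := by
    intro i hi
    have := hu_cont i hi; have := hx_cont i (by omega); have := hx_cont (i + 1) (by omega)
    fun_prop
  have hflux : ∀ i, i ≤ n → ∫ t in (0:ℝ)..T, u i t * x i t * (1 - x (i+1) t)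
      = ∫ t in (0:ℝ)..T, u 0 t * x 0 t * (1 - x 1 t) := by
    refine eq_apply_zero_of_pred_eq fun i h1 h2 => ?_
    have hprev := hF_cont (i - 1) (by omega)
    rw [Nat.sub_add_cancel h1] at hprev ⊢
    exact integral_eq_integral_of_deriv_eq_sub (hxdiff i h1 h2)
      (by simpa using (hxper i h1 h2 0).symm) hprev (hF_cont i h2) (hode i h1 h2)
  have hequil : ∀ i, i ≤ n → (1/T * ∫ t in (0:ℝ)..T, u i t) * e i * (1 - e (i+1))
      = (1/T * ∫ t in (0:ℝ)..T, u 0 t) * e 0 * (1 - e 1) :=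
    eq_apply_zero_of_pred_eq fun i h1 h2 => by simpa only [Nat.sub_add_cancel h1] using heq i h1 h2
  intro i hi
  have hexp_i := integral_mul_mul_one_sub_eq (hu_cont i hi) (hx_cont i (by omega))
    (hx_cont (i + 1) (by omega)) (e i) (e (i + 1)) 0 T
  have hexp_0 := integral_mul_mul_one_sub_eq (hu_cont 0 (by omega)) (hx_cont 0 (by omega))
    (hx_cont 1 (by omega)) (e 0) (e 1) 0 T
  simp only [hx0, he0, sub_self, mul_zero, zero_mul, intervalIntegral.integral_zero, mul_one]
    at hexp_0 hflux hequil
  linear_combination (1/T) * (hexp_i - hexp_0 - hflux i hi) + hequil i hi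

theorem rfm_third_order_moments
    (n : ℕ) (hn : 1 ≤ n) (T : ℝ) (hT : 0 < T)
    (u : ℕ → ℝ → ℝ) (x : ℕ → ℝ → ℝ) (e : ℕ → ℝ)
    (hu_cont : ∀ i, i ≤ n → Continuous (u i))
    (hu_pos : ∀ i, i ≤ n → ∀ t, 0 < u i t)
    (hu_per : ∀ i, i ≤ n → ∀ t, u i (t + T) = u i t)
    (hx0 : ∀ t, x 0 t = 1) (hxtop : ∀ t, x (n+1) t = 0)
    (hxdiff : ∀ i, 1 ≤ i → i ≤ n → Differentiable ℝ (x i))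
    (hxper : ∀ i, 1 ≤ i → i ≤ n → ∀ t, x i (t + T) = x i t)
    (hxmem : ∀ i, 1 ≤ i → i ≤ n → ∀ t, x i t ∈ Set.Ioo (0:ℝ) 1)
    (hode : ∀ i, 1 ≤ i → i ≤ n → ∀ t,
      deriv (x i) t
        = u (i-1) t * x (i-1) t * (1 - x i t) - u i t * x i t * (1 - x (i+1) t))
    (he0 : e 0 = 1) (hetop : e (n+1) = 0)
    (hemem : ∀ i, 1 ≤ i → i ≤ n → e i ∈ Set.Ioo (0:ℝ) 1)
    (heq : ∀ i, 1 ≤ i → i ≤ n →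
      (1/T * ∫ t in (0:ℝ)..T, u (i-1) t) * e (i-1) * (1 - e i)
        = (1/T * ∫ t in (0:ℝ)..T, u i t) * e i * (1 - e (i+1))) :
    ∀ i, i ≤ n →
      (1/T * ∫ t in (0:ℝ)..T, u i t * (x i t - e i) * (x (i+1) t - e (i+1)))
        = (1/T * ∫ t in (0:ℝ)..T, u 0 t * (x 1 t - e 1))
          + (1/T * ∫ t in (0:ℝ)..T, u i t * (x i t - e i)) * (1 - e (i+1))
          - (1/T * ∫ t in (0:ℝ)..T, u i t * (x (i+1) t - e (i+1))) * e i :=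
  rfm_third_order_moments_general n T u x e hu_cont hx0 hxtop hxdiff hxper hode he0 heq
end

section
/- Under the hypotheses of the RFM with T-periodic solution x and averaged equilibrium e, with zᵢ = xᵢ - eᵢ and moments η_{i,j} = (1/T)∫₀ᵀ uᵢ zⱼ dt, the following inequality holds for every i ∈ {1,…,n}: η_{0,1} ≥ η_{i,i+1} eᵢ² - η_{i-1,i-1}(1 - eᵢ)², with equality if and only if zᵢ(t) ≡ 0 (i.e., xᵢ(t) ≡ eᵢ). -/
open MeasureTheory intervalIntegral Real Filter

/-!
Write `Fⱼ = uⱼ xⱼ (1 - xⱼ₊₁)` for the flux and `zᵢ = xᵢ - eᵢ`. Since `xᵢ` is periodic, both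
`ẋᵢ = Fᵢ₋₁ - Fᵢ` and `zᵢ ẋᵢ` integrate to zero over a period. The first fact, together with the
equilibrium equations, makes the defect `∫ uⱼ eⱼ (1 - eⱼ₊₁) - Fⱼ` independent of `j`, and for
`j = 0` it is `T η₀₁`. The second, after the pointwise identity
`(uᵢ₋₁ xᵢ₋₁ + uᵢ (1 - xᵢ₊₁)) zᵢ² = (1 - eᵢ)² uᵢ₋₁ zᵢ₋₁ - eᵢ² uᵢ zᵢ₊₁ + (defects) - zᵢ (Fᵢ₋₁ - Fᵢ)`,
shows that `T (η₀₁ - η_{i,i+1} eᵢ² + η_{i-1,i-1} (1 - eᵢ)²)` is the integral of `zᵢ²` against a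
positive weight, which is nonnegative and vanishes exactly when `zᵢ ≡ 0`.
-/

theorem integral_eq_integral_of_hasDerivAt_sub {f g h : ℝ → ℝ} {a b : ℝ}
    (hf : ∀ t, HasDerivAt f (g t - h t) t) (hg : Continuous g) (hh : Continuous h)
    (hab : f a = f b) : ∫ t in a..b, g t = ∫ t in a..b, h t := by
  rw [← sub_eq_zero, ← integral_sub (hg.intervalIntegrable a b) (hh.intervalIntegrable a b),
    integral_eq_sub_of_hasDerivAt (fun t _ => hf t) ((hg.sub hh).intervalIntegrable a b), hab,
    sub_self]

theorem integral_sub_const_mul_eq_zero_of_hasDerivAt {f f' : ℝ → ℝ} {a b : ℝ} (c : ℝ)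
    (hf : ∀ t, HasDerivAt f (f' t) t) (hf' : Continuous f') (hab : f a = f b) :
    ∫ t in a..b, (f t - c) * f' t = 0 := by
  have hsq : ∀ t, HasDerivAt (fun s => (f s - c) ^ 2 / 2) ((f t - c) * f' t) t := fun t =>
    ((((hf t).sub_const c).pow 2).div_const 2).congr_deriv (by push_cast; ring)
  have hfc : Continuous f := continuous_iff_continuousAt.2 fun t => (hf t).continuousAt
  rw [integral_eq_sub_of_hasDerivAt (fun t _ => hsq t)
    (((hfc.sub continuous_const).mul hf').intervalIntegrable a b), hab, sub_self]

theorem integral_mul_sq_eq_zero_iff_of_periodic {w g : ℝ → ℝ} {T : ℝ} (hT : 0 < T)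
    (hw : Continuous w) (hw_pos : ∀ t, 0 < w t) (hg : Continuous g)
    (hper : Function.Periodic g T) :
    ∫ t in (0:ℝ)..T, w t * g t ^ 2 = 0 ↔ ∀ t, g t = 0 := by
  refine ⟨fun h t => ?_, fun h => by simp [h]⟩
  obtain ⟨s, hs, hst⟩ := hper.exists_mem_Ico₀ hT t
  rw [hst]
  by_contra hne
  exact (integral_pos hT (hw.mul (hg.pow 2)).continuousOn
    (fun r _ => mul_nonneg (hw_pos r).le (sq_nonneg _))
    ⟨s, Set.Ico_subset_Icc_self hs, mul_pos (hw_pos s) (pow_two_pos_of_ne_zero hne)⟩).ne' h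

def rfmFlux (u x : ℕ → ℝ → ℝ) (j : ℕ) (t : ℝ) : ℝ := u j t * x j t * (1 - x (j + 1) t)

noncomputable def fluxDefect (T : ℝ) (u x : ℕ → ℝ → ℝ) (e : ℕ → ℝ) (j : ℕ) : ℝ :=
  ∫ t in (0:ℝ)..T, (u j t * (e j * (1 - e (j + 1))) - rfmFlux u x j t)

section RFM

variable {n j : ℕ} {T : ℝ} {u x : ℕ → ℝ → ℝ} {e : ℕ → ℝ}

theorem continuous_rfmFlux (hu : Continuous (u j)) (hx : Continuous (x j))
    (hx' : Continuous (x (j + 1))) : Continuous (rfmFlux u x j) := by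
  unfold rfmFlux
  fun_prop

theorem continuous_rfm_site (hx0 : ∀ t, x 0 t = 1) (hxtop : ∀ t, x (n + 1) t = 0)
    (hxdiff : ∀ i, 1 ≤ i → i ≤ n → Differentiable ℝ (x i)) (hj : j ≤ n + 1) :
    Continuous (x j) := by
  rcases Nat.eq_zero_or_pos j with rfl | hj0
  · rw [show x 0 = fun _ => 1 from funext hx0]
    exact continuous_const
  rcases hj.eq_or_lt with rfl | hjn
  · rw [show x (n + 1) = fun _ => 0 from funext hxtop]
    exact continuous_const
  exact (hxdiff j hj0 (by omega)).continuous

theorem rfm_weight_pos (hu_pos : ∀ i, i ≤ n → ∀ t, 0 < u i t)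
    (hx0 : ∀ t, x 0 t = 1) (hxtop : ∀ t, x (n + 1) t = 0)
    (hxmem : ∀ i, 1 ≤ i → i ≤ n → ∀ t, x i t ∈ Set.Ioo (0:ℝ) 1) (hj : j + 1 ≤ n) (t : ℝ) :
    0 < u j t * x j t + u (j + 1) t * (1 - x (j + 2) t) := by
  have hxj : 0 < x j t := by
    rcases j with _ | j
    · simp [hx0]
    · exact (hxmem _ (by omega) (by omega) t).1
  have hxj2 : x (j + 2) t ≤ 1 := by
    rcases (show j + 2 ≤ n ∨ j + 2 = n + 1 by omega) with h | h
    · exact (hxmem _ (by omega) h t).2.le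
    · simp [h, hxtop]
  exact add_pos_of_pos_of_nonneg (mul_pos (hu_pos j (by omega) t) hxj)
    (mul_nonneg (hu_pos _ hj t).le (by linarith))

theorem hasDerivAt_rfm_site
    (hxdiff : ∀ i, 1 ≤ i → i ≤ n → Differentiable ℝ (x i))
    (hode : ∀ i, 1 ≤ i → i ≤ n → ∀ t,
      deriv (x i) t
        = u (i-1) t * x (i-1) t * (1 - x i t) - u i t * x i t * (1 - x (i+1) t))
    (hj : j + 1 ≤ n) (t : ℝ) :
    HasDerivAt (x (j + 1)) (rfmFlux u x j t - rfmFlux u x (j + 1) t) t := by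
  have h := hode (j + 1) (by omega) hj t
  rw [Nat.add_sub_cancel] at h
  exact h ▸ (hxdiff (j + 1) (by omega) hj t).hasDerivAt

theorem fluxDefect_zero (hx0 : ∀ t, x 0 t = 1) (he0 : e 0 = 1) :
    fluxDefect T u x e 0 = ∫ t in (0:ℝ)..T, u 0 t * (x 1 t - e 1) := by
  refine integral_congr fun t _ => ?_
  simp only [rfmFlux, hx0, he0]
  ring

theorem fluxDefect_succ (hT : T ≠ 0) (hu : Continuous (u j)) (hu' : Continuous (u (j + 1)))
    (hF : Continuous (rfmFlux u x j)) (hF' : Continuous (rfmFlux u x (j + 1)))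
    (hder : ∀ t, HasDerivAt (x (j + 1)) (rfmFlux u x j t - rfmFlux u x (j + 1) t) t)
    (hper : x (j + 1) 0 = x (j + 1) T)
    (heq : (1 / T * ∫ t in (0:ℝ)..T, u j t) * e j * (1 - e (j + 1))
      = (1 / T * ∫ t in (0:ℝ)..T, u (j + 1) t) * e (j + 1) * (1 - e (j + 1 + 1))) :
    fluxDefect T u x e (j + 1) = fluxDefect T u x e j := by
  have hcons := integral_eq_integral_of_hasDerivAt_sub hder hF hF' hper
  unfold fluxDefect
  simp (disch := exact Continuous.intervalIntegrable (by fun_prop) _ _) only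
    [intervalIntegral.integral_sub, intervalIntegral.integral_mul_const, hcons]
  field_simp at heq
  linear_combination heq.symm

theorem fluxDefect_eq_fluxDefect_zero (hT : T ≠ 0) (hu : ∀ k ≤ n, Continuous (u k))
    (hx : ∀ k ≤ n + 1, Continuous (x k))
    (hder : ∀ k, k + 1 ≤ n → ∀ t,
      HasDerivAt (x (k + 1)) (rfmFlux u x k t - rfmFlux u x (k + 1) t) t)
    (hper : ∀ k, k + 1 ≤ n → x (k + 1) 0 = x (k + 1) T)
    (heq : ∀ k, k + 1 ≤ n → (1 / T * ∫ t in (0:ℝ)..T, u k t) * e k * (1 - e (k + 1))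
      = (1 / T * ∫ t in (0:ℝ)..T, u (k + 1) t) * e (k + 1) * (1 - e (k + 1 + 1))) :
    ∀ k ≤ n, fluxDefect T u x e k = fluxDefect T u x e 0 := by
  intro k hk
  induction k with
  | zero => rfl
  | succ k ih =>
    rw [fluxDefect_succ hT (hu k (by omega)) (hu _ hk)
      (continuous_rfmFlux (hu k (by omega)) (hx k (by omega)) (hx _ (by omega)))
      (continuous_rfmFlux (hu _ hk) (hx _ (by omega)) (hx _ (by omega)))
      (hder k hk) (hper k hk) (heq k hk), ih (by omega)]

theorem integral_weight_mul_sq_eq (hu : Continuous (u j)) (hu' : Continuous (u (j + 1)))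
    (hx : Continuous (x j)) (hx' : Continuous (x (j + 1))) (hx'' : Continuous (x (j + 2)))
    (hder : ∀ t, HasDerivAt (x (j + 1)) (rfmFlux u x j t - rfmFlux u x (j + 1) t) t)
    (hper : x (j + 1) 0 = x (j + 1) T) :
    ∫ t in (0:ℝ)..T,
        (u j t * x j t + u (j + 1) t * (1 - x (j + 2) t)) * (x (j + 1) t - e (j + 1)) ^ 2
      = (1 - e (j + 1)) ^ 2 * (∫ t in (0:ℝ)..T, u j t * (x j t - e j))
        - e (j + 1) ^ 2 * (∫ t in (0:ℝ)..T, u (j + 1) t * (x (j + 2) t - e (j + 2)))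
        + (1 - e (j + 1)) * fluxDefect T u x e j + e (j + 1) * fluxDefect T u x e (j + 1) := by
  have henergy := integral_sub_const_mul_eq_zero_of_hasDerivAt (e (j + 1)) hder
    ((continuous_rfmFlux hu hx hx').sub (continuous_rfmFlux hu' hx' hx'')) hper
  have hpt : ∀ t ∈ Set.uIcc 0 T,
      (u j t * x j t + u (j + 1) t * (1 - x (j + 2) t)) * (x (j + 1) t - e (j + 1)) ^ 2
        = (1 - e (j + 1)) ^ 2 * (u j t * (x j t - e j))
          - e (j + 1) ^ 2 * (u (j + 1) t * (x (j + 2) t - e (j + 2)))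
          + (1 - e (j + 1)) * (u j t * (e j * (1 - e (j + 1))) - rfmFlux u x j t)
          + e (j + 1) * (u (j + 1) t * (e (j + 1) * (1 - e (j + 1 + 1))) - rfmFlux u x (j + 1) t)
          - (x (j + 1) t - e (j + 1)) * (rfmFlux u x j t - rfmFlux u x (j + 1) t) := by
    intro t _
    simp only [rfmFlux]
    ring
  have hF := continuous_rfmFlux hu hx hx'
  have hF' := continuous_rfmFlux hu' hx' hx''
  unfold fluxDefect
  rw [integral_congr hpt]
  simp (disch := exact Continuous.intervalIntegrable (by fun_prop) _ _) only
    [intervalIntegral.integral_add, intervalIntegral.integral_sub,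
      intervalIntegral.integral_const_mul, henergy]
  ring

end RFM

theorem rfm_eta01_lower_bounds_general
    (n : ℕ) (T : ℝ) (hT : 0 < T)
    (u : ℕ → ℝ → ℝ) (x : ℕ → ℝ → ℝ) (e : ℕ → ℝ)
    (hu_cont : ∀ i, i ≤ n → Continuous (u i))
    (hu_pos : ∀ i, i ≤ n → ∀ t, 0 < u i t)
    (hx0 : ∀ t, x 0 t = 1) (hxtop : ∀ t, x (n+1) t = 0)
    (hxdiff : ∀ i, 1 ≤ i → i ≤ n → Differentiable ℝ (x i))
    (hxper : ∀ i, 1 ≤ i → i ≤ n → ∀ t, x i (t + T) = x i t)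
    (hxmem : ∀ i, 1 ≤ i → i ≤ n → ∀ t, x i t ∈ Set.Ioo (0:ℝ) 1)
    (hode : ∀ i, 1 ≤ i → i ≤ n → ∀ t,
      deriv (x i) t
        = u (i-1) t * x (i-1) t * (1 - x i t) - u i t * x i t * (1 - x (i+1) t))
    (he0 : e 0 = 1)
    (heq : ∀ i, 1 ≤ i → i ≤ n →
      (1/T * ∫ t in (0:ℝ)..T, u (i-1) t) * e (i-1) * (1 - e i)
        = (1/T * ∫ t in (0:ℝ)..T, u i t) * e i * (1 - e (i+1))) :
    ∀ i, 1 ≤ i → i ≤ n →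
      ((1/T * ∫ t in (0:ℝ)..T, u i t * (x (i+1) t - e (i+1))) * (e i)^2
          - (1/T * ∫ t in (0:ℝ)..T, u (i-1) t * (x (i-1) t - e (i-1))) * (1 - e i)^2
        ≤ 1/T * ∫ t in (0:ℝ)..T, u 0 t * (x 1 t - e 1))
      ∧ ((1/T * ∫ t in (0:ℝ)..T, u 0 t * (x 1 t - e 1))
            = (1/T * ∫ t in (0:ℝ)..T, u i t * (x (i+1) t - e (i+1))) * (e i)^2
              - (1/T * ∫ t in (0:ℝ)..T, u (i-1) t * (x (i-1) t - e (i-1))) * (1 - e i)^2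
          ↔ ∀ t, x i t = e i) := by
  intro i hi hin
  obtain ⟨j, rfl⟩ : ∃ j, i = j + 1 := ⟨i - 1, by omega⟩
  simp only [Nat.add_sub_cancel, add_assoc, Nat.reduceAdd]
  have hxc : ∀ k ≤ n + 1, Continuous (x k) := fun k => continuous_rfm_site hx0 hxtop hxdiff
  have hder := fun k (hk : k + 1 ≤ n) => hasDerivAt_rfm_site (u := u) hxdiff hode hk
  have hper : ∀ k, k + 1 ≤ n → x (k + 1) 0 = x (k + 1) T := fun k hk => by
    simpa using (hxper (k + 1) (by omega) hk 0).symm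
  have hdefect := fluxDefect_eq_fluxDefect_zero hT.ne' hu_cont hxc hder hper
    fun k hk => by simpa using heq (k + 1) (by omega) hk
  have hK := integral_weight_mul_sq_eq (e := e) (hu_cont j (by omega)) (hu_cont _ hin)
    (hxc j (by omega)) (hxc _ (by omega)) (hxc _ (by omega)) (hder j hin) (hper j hin)
  rw [hdefect j (by omega), hdefect (j + 1) hin, fluxDefect_zero hx0 he0] at hK
  set I₀ := ∫ t in (0:ℝ)..T, u 0 t * (x 1 t - e 1)
  set K := ∫ t in (0:ℝ)..T,
    (u j t * x j t + u (j + 1) t * (1 - x (j + 2) t)) * (x (j + 1) t - e (j + 1)) ^ 2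
  have hgap : 1 / T * I₀ - ((1 / T * ∫ t in (0:ℝ)..T, u (j + 1) t * (x (j + 2) t - e (j + 2)))
      * e (j + 1) ^ 2 - (1 / T * ∫ t in (0:ℝ)..T, u j t * (x j t - e j)) * (1 - e (j + 1)) ^ 2)
      = K / T := by
    rw [hK]; ring
  have hw := rfm_weight_pos hu_pos hx0 hxtop hxmem hin
  have hK_eq_zero : K = 0 ↔ ∀ t, x (j + 1) t - e (j + 1) = 0 :=
    integral_mul_sq_eq_zero_iff_of_periodic hT
      (((hu_cont j (by omega)).mul (hxc j (by omega))).add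
        ((hu_cont _ hin).mul (continuous_const.sub (hxc _ (by omega))))) hw
      ((hxc (j + 1) (by omega)).sub continuous_const) fun t => by simp [hxper (j + 1) hi hin t]
  have hK_nonneg : 0 ≤ K :=
    intervalIntegral.integral_nonneg hT.le fun t _ => mul_nonneg (hw t).le (sq_nonneg _)
  refine ⟨sub_nonneg.1 (hgap ▸ div_nonneg hK_nonneg hT.le), ?_⟩
  rw [← sub_eq_zero, hgap, div_eq_zero_iff, or_iff_left hT.ne', hK_eq_zero]
  simp only [sub_eq_zero]

theorem rfm_eta01_lower_bounds
    (n : ℕ) (hn : 1 ≤ n) (T : ℝ) (hT : 0 < T)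
    (u : ℕ → ℝ → ℝ) (x : ℕ → ℝ → ℝ) (e : ℕ → ℝ)
    (hu_cont : ∀ i, i ≤ n → Continuous (u i))
    (hu_pos : ∀ i, i ≤ n → ∀ t, 0 < u i t)
    (hu_per : ∀ i, i ≤ n → ∀ t, u i (t + T) = u i t)
    (hx0 : ∀ t, x 0 t = 1) (hxtop : ∀ t, x (n+1) t = 0)
    (hxdiff : ∀ i, 1 ≤ i → i ≤ n → Differentiable ℝ (x i))
    (hxper : ∀ i, 1 ≤ i → i ≤ n → ∀ t, x i (t + T) = x i t)
    (hxmem : ∀ i, 1 ≤ i → i ≤ n → ∀ t, x i t ∈ Set.Ioo (0:ℝ) 1)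
    (hode : ∀ i, 1 ≤ i → i ≤ n → ∀ t,
      deriv (x i) t
        = u (i-1) t * x (i-1) t * (1 - x i t) - u i t * x i t * (1 - x (i+1) t))
    (he0 : e 0 = 1) (hetop : e (n+1) = 0)
    (hemem : ∀ i, 1 ≤ i → i ≤ n → e i ∈ Set.Ioo (0:ℝ) 1)
    (heq : ∀ i, 1 ≤ i → i ≤ n →
      (1/T * ∫ t in (0:ℝ)..T, u (i-1) t) * e (i-1) * (1 - e i)
        = (1/T * ∫ t in (0:ℝ)..T, u i t) * e i * (1 - e (i+1))) :
    ∀ i, 1 ≤ i → i ≤ n →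
      ((1/T * ∫ t in (0:ℝ)..T, u i t * (x (i+1) t - e (i+1))) * (e i)^2
          - (1/T * ∫ t in (0:ℝ)..T, u (i-1) t * (x (i-1) t - e (i-1))) * (1 - e i)^2
        ≤ 1/T * ∫ t in (0:ℝ)..T, u 0 t * (x 1 t - e 1))
      ∧ ((1/T * ∫ t in (0:ℝ)..T, u 0 t * (x 1 t - e 1))
            = (1/T * ∫ t in (0:ℝ)..T, u i t * (x (i+1) t - e (i+1))) * (e i)^2
              - (1/T * ∫ t in (0:ℝ)..T, u (i-1) t * (x (i-1) t - e (i-1))) * (1 - e i)^2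
          ↔ ∀ t, x i t = e i) :=
  rfm_eta01_lower_bounds_general n T hT u x e hu_cont hu_pos hx0 hxtop hxdiff hxper hxmem hode he0
    heq
end

section
/- For the RFM with n = 1, i.e., ẋ₁ = u₀(1 - x₁) - u₁ x₁ with continuous positive T-periodic rates u₀, u₁, let x₁ be the T-periodic solution with values in (0,1) and let e₁ = ū₀/(ū₀ + ū₁). Then the average production rate satisfies (1/T)∫₀ᵀ u₁(t) x₁(t) dt ≤ ū₁ e₁, i.e., there is no gain of entrainment. -/
open MeasureTheory intervalIntegral Real Filter

/-!
Write `A = ∫ u₀`, `B = ∫ u₁`, `P = ∫ u₁ x`, `Q = ∫ u₁ (1 - x)` and `R = ∫ u₀ x` over a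
period. Integrating the ODE gives `A = R + P`, and `B = Q + P`. Since `x + log (1 - x)` is
periodic with derivative `u₁ x² / (1 - x) - u₀ x`, also `R = ∫ u₁ x² / (1 - x)`. Cauchy–Schwarz
for the weight `u₁ (1 - x)` then gives `P² ≤ Q R`, which is exactly `P (A + B) ≤ A B`.
-/

theorem integral_eq_zero_of_hasDerivAt_of_eq {f f' : ℝ → ℝ} {a b : ℝ}
    (hf : ∀ t, HasDerivAt f (f' t) t) (hf' : IntervalIntegrable f' volume a b) (hab : f a = f b) :
    ∫ t in a..b, f' t = 0 := by
  rw [integral_eq_sub_of_hasDerivAt (fun t _ => hf t) hf', hab, sub_self]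

theorem sq_integral_le_integral_mul_integral_sq_div {f g : ℝ → ℝ} {a b : ℝ} (hab : a < b)
    (hf : IntervalIntegrable f volume a b) (hg : IntervalIntegrable g volume a b)
    (hfg : IntervalIntegrable (fun t => f t ^ 2 / g t) volume a b)
    (hg_pos : ∀ t ∈ Set.Icc a b, 0 < g t) :
    (∫ t in a..b, f t) ^ 2 ≤ (∫ t in a..b, g t) * ∫ t in a..b, f t ^ 2 / g t := by
  set P := ∫ t in a..b, f t
  set Q := ∫ t in a..b, g t
  have hQ : 0 < Q :=
    intervalIntegral_pos_of_pos_on hg (fun t ht => hg_pos t (Set.Ioo_subset_Icc_self ht)) hab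
  have hsq : ∀ t ∈ Set.uIcc a b,
      (Q * f t - P * g t) ^ 2 / g t = Q ^ 2 * (f t ^ 2 / g t) - 2 * Q * P * f t + P ^ 2 * g t := by
    intro t ht
    rw [Set.uIcc_of_le hab.le] at ht
    field_simp [(hg_pos t ht).ne']
    ring
  have hnonneg : 0 ≤ ∫ t in a..b, (Q * f t - P * g t) ^ 2 / g t :=
    integral_nonneg hab.le fun t ht => div_nonneg (sq_nonneg _) (hg_pos t ht).le
  rw [integral_congr hsq, integral_add ((hfg.const_mul _).sub (hf.const_mul _)) (hg.const_mul _),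
    integral_sub (hfg.const_mul _) (hf.const_mul _), intervalIntegral.integral_const_mul,
    intervalIntegral.integral_const_mul, intervalIntegral.integral_const_mul] at hnonneg
  nlinarith

def IsRFM1Solution (u0 u1 x : ℝ → ℝ) : Prop :=
  ∀ t, HasDerivAt x (u0 t * (1 - x t) - u1 t * x t) t

namespace IsRFM1Solution

variable {u0 u1 x : ℝ → ℝ} {a b : ℝ}

theorem continuous (hx : IsRFM1Solution u0 u1 x) : Continuous x :=
  continuous_iff_continuousAt.2 fun t => (hx t).continuousAt

theorem integral_u0_eq (hx : IsRFM1Solution u0 u1 x) (hu0 : Continuous u0) (hu1 : Continuous u1)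
    (hper : x a = x b) :
    ∫ t in a..b, u0 t = (∫ t in a..b, u0 t * x t) + ∫ t in a..b, u1 t * x t := by
  have hxc := hx.continuous
  have hzero := integral_eq_zero_of_hasDerivAt_of_eq hx
    ((by fun_prop : Continuous fun t => u0 t * (1 - x t) - u1 t * x t).intervalIntegrable a b) hper
  simp only [mul_sub, mul_one] at hzero
  rw [integral_sub ((by fun_prop : Continuous fun t => u0 t - u0 t * x t).intervalIntegrable a b)
      ((by fun_prop : Continuous fun t => u1 t * x t).intervalIntegrable a b),
    integral_sub (hu0.intervalIntegrable a b)
      ((by fun_prop : Continuous fun t => u0 t * x t).intervalIntegrable a b)] at hzero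
  linarith

theorem integral_u0_mul_eq (hx : IsRFM1Solution u0 u1 x) (hu0 : Continuous u0)
    (hu1 : Continuous u1) (hx_lt : ∀ t, x t < 1) (hper : x a = x b) :
    ∫ t in a..b, u0 t * x t = ∫ t in a..b, u1 t * x t ^ 2 / (1 - x t) := by
  have hxc := hx.continuous
  have hne : ∀ t, 1 - x t ≠ 0 := fun t => (sub_pos.2 (hx_lt t)).ne'
  have hderiv : ∀ t, HasDerivAt (fun s => x s + log (1 - x s))
      (u1 t * x t ^ 2 / (1 - x t) - u0 t * x t) t := by
    intro t
    refine ((hx t).add (((hasDerivAt_const t (1 : ℝ)).sub (hx t)).log (hne t))).congr_deriv ?_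
    simp only [Pi.sub_apply]
    field_simp [hne t]
    ring
  have hG : Continuous fun t => u1 t * x t ^ 2 / (1 - x t) :=
    (hu1.mul (hxc.pow 2)).div (continuous_const.sub hxc) hne
  have hzero := integral_eq_zero_of_hasDerivAt_of_eq hderiv
    ((hG.sub (hu0.mul hxc)).intervalIntegrable a b) (by simp only [hper])
  rw [integral_sub (hG.intervalIntegrable a b)
    ((by fun_prop : Continuous fun t => u0 t * x t).intervalIntegrable a b)] at hzero
  linarith

theorem integral_u1_mul_mul_integral_add_le (hx : IsRFM1Solution u0 u1 x) (hab : a < b)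
    (hu0 : Continuous u0) (hu1 : Continuous u1) (hu1_pos : ∀ t, 0 < u1 t)
    (hx_mem : ∀ t, x t ∈ Set.Ioo (0 : ℝ) 1) (hper : x a = x b) :
    (∫ t in a..b, u1 t * x t) * ((∫ t in a..b, u0 t) + ∫ t in a..b, u1 t)
      ≤ (∫ t in a..b, u0 t) * ∫ t in a..b, u1 t := by
  have hxc := hx.continuous
  have hne : ∀ t, 1 - x t ≠ 0 := fun t => (sub_pos.2 (hx_mem t).2).ne'
  have hweight : ∀ t, (u1 t * x t) ^ 2 / (u1 t * (1 - x t)) = u1 t * x t ^ 2 / (1 - x t) := by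
    intro t
    field_simp [(hu1_pos t).ne', hne t]
  have hcs := sq_integral_le_integral_mul_integral_sq_div hab
    ((by fun_prop : Continuous fun t => u1 t * x t).intervalIntegrable a b)
    ((by fun_prop : Continuous fun t => u1 t * (1 - x t)).intervalIntegrable a b)
    (funext hweight ▸
      ((hu1.mul (hxc.pow 2)).div (continuous_const.sub hxc) hne).intervalIntegrable a b)
    fun t _ => mul_pos (hu1_pos t) (sub_pos.2 (hx_mem t).2)
  have hQ : ∫ t in a..b, u1 t * (1 - x t)
      = (∫ t in a..b, u1 t) - ∫ t in a..b, u1 t * x t := by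
    simp only [mul_sub, mul_one]
    exact integral_sub (hu1.intervalIntegrable a b)
      ((by fun_prop : Continuous fun t => u1 t * x t).intervalIntegrable a b)
  simp only [hweight] at hcs
  rw [← hx.integral_u0_mul_eq hu0 hu1 (fun t => (hx_mem t).2) hper, hQ] at hcs
  rw [hx.integral_u0_eq hu0 hu1 hper]
  linear_combination hcs

end IsRFM1Solution

theorem rfm1_no_goe_general
    (T : ℝ) (hT : 0 < T) (u0 u1 x1 : ℝ → ℝ)
    (hu0c : Continuous u0) (hu1c : Continuous u1)
    (hu0p : ∀ t, 0 < u0 t) (hu1p : ∀ t, 0 < u1 t)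
    (hx1d : Differentiable ℝ x1) (hx1per : ∀ t, x1 (t + T) = x1 t)
    (hx1mem : ∀ t, x1 t ∈ Set.Ioo (0:ℝ) 1)
    (hode : ∀ t, deriv x1 t = u0 t * (1 - x1 t) - u1 t * x1 t) :
    1/T * ∫ t in (0:ℝ)..T, u1 t * x1 t
      ≤ (1/T * ∫ t in (0:ℝ)..T, u1 t)
        * ((1/T * ∫ t in (0:ℝ)..T, u0 t)
            / ((1/T * ∫ t in (0:ℝ)..T, u0 t) + (1/T * ∫ t in (0:ℝ)..T, u1 t))) := by
  have hx : IsRFM1Solution u0 u1 x1 := fun t => hode t ▸ (hx1d t).hasDerivAt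
  have hper : x1 0 = x1 T := by simpa using (hx1per 0).symm
  have hA : 0 < ∫ t in (0:ℝ)..T, u0 t :=
    intervalIntegral_pos_of_pos (hu0c.intervalIntegrable 0 T) hu0p hT
  have hB : 0 < ∫ t in (0:ℝ)..T, u1 t :=
    intervalIntegral_pos_of_pos (hu1c.intervalIntegrable 0 T) hu1p hT
  have hmain := hx.integral_u1_mul_mul_integral_add_le hT hu0c hu1c hu1p hx1mem hper
  rw [← mul_add, mul_div_mul_left _ _ (one_div_pos.2 hT).ne', mul_assoc]
  gcongr
  rw [← mul_div_assoc, le_div_iff₀ (add_pos hA hB)]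
  linarith

theorem rfm1_no_goe
    (T : ℝ) (hT : 0 < T) (u0 u1 x1 : ℝ → ℝ)
    (hu0c : Continuous u0) (hu1c : Continuous u1)
    (hu0p : ∀ t, 0 < u0 t) (hu1p : ∀ t, 0 < u1 t)
    (hu0per : ∀ t, u0 (t + T) = u0 t) (hu1per : ∀ t, u1 (t + T) = u1 t)
    (hx1d : Differentiable ℝ x1) (hx1per : ∀ t, x1 (t + T) = x1 t)
    (hx1mem : ∀ t, x1 t ∈ Set.Ioo (0:ℝ) 1)
    (hode : ∀ t, deriv x1 t = u0 t * (1 - x1 t) - u1 t * x1 t) :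
    1/T * ∫ t in (0:ℝ)..T, u1 t * x1 t
      ≤ (1/T * ∫ t in (0:ℝ)..T, u1 t)
        * ((1/T * ∫ t in (0:ℝ)..T, u0 t)
            / ((1/T * ∫ t in (0:ℝ)..T, u0 t) + (1/T * ∫ t in (0:ℝ)..T, u1 t))) :=
  rfm1_no_goe_general T hT u0 u1 x1 hu0c hu1c hu0p hu1p hx1d hx1per hx1mem hode
end

section
/- For the RFM with n = 1, ẋ₁ = u₀(1 - x₁) - u₁ x₁ with continuous positive T-periodic rates, let x₁ be the T-periodic solution in (0,1). The average production rate (1/T)∫₀ᵀ u₁ x₁ dt equals ū₁ ū₀/(ū₀ + ū₁) if and only if u₁(t) = (ū₁/ū₀) u₀(t) for all t ∈ [0,T). -/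
/-!
Integrating the equation over a period gives the balance `∫ u₀ (1 - x) = ∫ u₁ x`, and integrating
`x' / (1 - x) = u₀ - u₁ g(x)`, where `g(x) = x / (1 - x)`, gives `∫ u₁ g(x) = ∫ u₀`. Put
`k = ū₀ / (ū₀ + ū₁)`, so that `g(k) = ū₀ / ū₁`. Then, with weight `u₁`, the mean of `g ∘ x` is `g(k)`,
and equality in the theorem says that the mean of `x` is `k`. Because `g` lies above its tangent at
`k` with gap `(x - k)² / ((1 - x)(1 - k)²)`, the two means force `x ≡ k`, and the equation then reads
`u₀ (1 - k) = u₁ k`. Conversely, for proportional rates the balance is a linear equation for `∫ u₁ x`.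
-/

open MeasureTheory intervalIntegral Real Set

theorem eqOn_zero_of_integral_eq_zero {f : ℝ → ℝ} {a b : ℝ} (hab : a < b) (hf : Continuous f)
    (hf0 : ∀ t, 0 ≤ f t) (h : ∫ t in a..b, f t = 0) : EqOn f 0 (Icc a b) := by
  rw [integral_eq_zero_iff_of_le_of_nonneg_ae hab.le (.of_forall hf0)
    (hf.intervalIntegrable a b), Measure.restrict_congr_set Ioc_ae_eq_Icc] at h
  exact Measure.eqOn_Icc_of_ae_eq volume hab.ne h hf.continuousOn continuousOn_const

theorem div_one_sub_sub_tangent {x k : ℝ} (hx : x < 1) (hk : k < 1) :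
    x / (1 - x) - k / (1 - k) - (x - k) / (1 - k) ^ 2
      = (x - k) ^ 2 / ((1 - x) * (1 - k) ^ 2) := by
  have : 1 - x ≠ 0 := by linarith
  have : 1 - k ≠ 0 := by linarith
  field_simp
  ring

theorem eqOn_const_of_integral_mul_div_one_sub_eq {a b k : ℝ} {w x : ℝ → ℝ} (hab : a < b)
    (hw : Continuous w) (hw0 : ∀ t, 0 < w t) (hx : Continuous x) (hx1 : ∀ t, x t < 1)
    (hk : k < 1) (hmean : ∫ t in a..b, w t * x t = k * ∫ t in a..b, w t)
    (hconv : ∫ t in a..b, w t * (x t / (1 - x t)) = k / (1 - k) * ∫ t in a..b, w t) :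
    EqOn x (fun _ => k) (Icc a b) := by
  have hg : Continuous fun t => x t / (1 - x t) :=
    hx.div (continuous_const.sub hx) fun t => (sub_pos.2 (hx1 t)).ne'
  have hW : IntervalIntegrable w volume a b := hw.intervalIntegrable a b
  have hWG : IntervalIntegrable (fun t => w t * (x t / (1 - x t))) volume a b :=
    (hw.mul hg).intervalIntegrable a b
  have hWX : IntervalIntegrable (fun t => w t * x t) volume a b :=
    (hw.mul hx).intervalIntegrable a b
  set gap := fun t => w t * ((x t - k) ^ 2 / ((1 - x t) * (1 - k) ^ 2)) with hgap
  have hgap_eq : gap = fun t => (w t * (x t / (1 - x t)) - k / (1 - k) * w t)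
      - ((1 - k) ^ 2)⁻¹ * (w t * x t - k * w t) := by
    ext t
    simp only [hgap]
    rw [← div_one_sub_sub_tangent (hx1 t) hk]
    ring
  have hgap_int : ∫ t in a..b, gap t = 0 := by
    rw [hgap_eq, intervalIntegral.integral_sub (hWG.sub (hW.const_mul _))
        ((hWX.sub (hW.const_mul _)).const_mul _),
      intervalIntegral.integral_sub hWG (hW.const_mul _), intervalIntegral.integral_const_mul,
      intervalIntegral.integral_const_mul, intervalIntegral.integral_sub hWX (hW.const_mul _),
      intervalIntegral.integral_const_mul, hmean, hconv]
    ring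
  have hgap_cont : Continuous gap := by
    rw [hgap_eq]
    fun_prop
  intro t ht
  have h1x : 0 < 1 - x t := sub_pos.2 (hx1 t)
  have hgap_t := eqOn_zero_of_integral_eq_zero hab hgap_cont (fun s => ?_) hgap_int ht
  · simp only [hgap, Pi.zero_apply, mul_eq_zero, (hw0 t).ne', div_eq_zero_iff, false_or]
      at hgap_t
    simpa [sub_eq_zero, h1x.ne', (sub_pos.2 hk).ne'] using hgap_t
  · have := sub_pos.2 (hx1 s)
    have := hw0 s
    positivity

section PeriodicOrbit

variable {a b : ℝ} {u0 u1 x : ℝ → ℝ}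

theorem integral_mul_one_sub_eq_integral_mul (hu0 : Continuous u0) (hu1 : Continuous u1)
    (hx : Differentiable ℝ x) (hxab : x a = x b)
    (hode : ∀ t, deriv x t = u0 t * (1 - x t) - u1 t * x t) :
    ∫ t in a..b, u0 t * (1 - x t) = ∫ t in a..b, u1 t * x t := by
  have hcx := hx.continuous
  have hin : IntervalIntegrable (fun t => u0 t * (1 - x t)) volume a b := by
    apply Continuous.intervalIntegrable; fun_prop
  have hout : IntervalIntegrable (fun t => u1 t * x t) volume a b := by
    apply Continuous.intervalIntegrable; fun_prop
  have hflux := integral_eq_sub_of_hasDerivAt (fun t _ => hode t ▸ (hx t).hasDerivAt)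
    (hin.sub hout)
  rwa [intervalIntegral.integral_sub hin hout, hxab, sub_self, sub_eq_zero] at hflux

theorem integral_mul_div_one_sub_eq_integral (hu0 : Continuous u0) (hu1 : Continuous u1)
    (hx : Differentiable ℝ x) (hxab : x a = x b) (hx1 : ∀ t, x t < 1)
    (hode : ∀ t, deriv x t = u0 t * (1 - x t) - u1 t * x t) :
    ∫ t in a..b, u1 t * (x t / (1 - x t)) = ∫ t in a..b, u0 t := by
  have hcx := hx.continuous
  have h1x : ∀ t, 1 - x t ≠ 0 := fun t => (sub_pos.2 (hx1 t)).ne'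
  have hin : IntervalIntegrable u0 volume a b := hu0.intervalIntegrable a b
  have hout : IntervalIntegrable (fun t => u1 t * (x t / (1 - x t))) volume a b :=
    (hu1.mul (hcx.div (continuous_const.sub hcx) h1x)).intervalIntegrable a b
  have hlog : ∀ t, HasDerivAt (fun s => -log (1 - x s)) (u0 t - u1 t * (x t / (1 - x t))) t :=
    fun t => (((hx t).hasDerivAt.const_sub 1).log (h1x t)).neg.congr_deriv (by
      rw [hode t]
      field_simp [h1x t])
  have hflux := integral_eq_sub_of_hasDerivAt (fun t _ => hlog t) (hin.sub hout)
  rw [intervalIntegral.integral_sub hin hout, hxab, sub_self, sub_eq_zero] at hflux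
  exact hflux.symm

theorem eqOn_Ico_of_integral_mul_eq (hab : a < b) (hu0 : Continuous u0) (hu1 : Continuous u1)
    (hA0 : 0 < ∫ t in a..b, u0 t) (hu1p : ∀ t, 0 < u1 t) (hx : Differentiable ℝ x)
    (hxab : x a = x b) (hx1 : ∀ t, x t < 1)
    (hode : ∀ t, deriv x t = u0 t * (1 - x t) - u1 t * x t)
    (h : ∫ t in a..b, u1 t * x t = (∫ t in a..b, u1 t) * (∫ t in a..b, u0 t)
      / ((∫ t in a..b, u0 t) + ∫ t in a..b, u1 t)) :
    ∀ t ∈ Ico a b, u1 t = (∫ s in a..b, u1 s) / (∫ s in a..b, u0 s) * u0 t := by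
  set A0 := ∫ t in a..b, u0 t
  set A1 := ∫ t in a..b, u1 t
  have hA1 : 0 < A1 := intervalIntegral_pos_of_pos (hu1.intervalIntegrable a b) hu1p hab
  set k := A0 / (A0 + A1) with hk_def
  have hk : k < 1 := (div_lt_one (by positivity)).2 (by linarith)
  have hxk : EqOn x (fun _ => k) (Icc a b) := by
    refine eqOn_const_of_integral_mul_div_one_sub_eq hab hu1 hu1p hx.continuous hx1 hk ?_ ?_
    · rw [h, hk_def]
      ring
    · have hconv : ∫ t in a..b, u1 t * (x t / (1 - x t)) = A0 :=
        integral_mul_div_one_sub_eq_integral hu0 hu1 hx hxab hx1 hode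
      change _ = _ * A1
      rw [hconv, hk_def]
      field_simp [hA1.ne']
      ring
  have hbalance : EqOn (fun t => A0 * u1 t) (fun t => A1 * u0 t) (Ioo a b) := by
    intro t ht
    have hd : deriv x t = 0 := by
      rw [(hxk.eventuallyEq_of_mem (Icc_mem_nhds ht.1 ht.2)).deriv_eq]
      exact deriv_const t k
    have hode_t := hode t
    rw [hd, hxk (Ioo_subset_Icc_self ht), hk_def] at hode_t
    field_simp at hode_t
    show A0 * u1 t = A1 * u0 t
    linarith
  have hbalance_Icc := hbalance.closure (by fun_prop) (by fun_prop)
  rw [closure_Ioo hab.ne] at hbalance_Icc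
  intro t ht
  have hbalance_t : A0 * u1 t = A1 * u0 t := hbalance_Icc (Ico_subset_Icc_self ht)
  rw [div_mul_eq_mul_div, eq_div_iff hA0.ne']
  linarith

theorem integral_mul_eq_of_eqOn_Ico (hab : a < b) (hu0 : Continuous u0) (hu1 : Continuous u1)
    (hA0 : ∫ t in a..b, u0 t ≠ 0) (hA : (∫ t in a..b, u0 t) + ∫ t in a..b, u1 t ≠ 0)
    (hx : Differentiable ℝ x) (hxab : x a = x b)
    (hode : ∀ t, deriv x t = u0 t * (1 - x t) - u1 t * x t)
    (h : ∀ t ∈ Ico a b, u1 t = (∫ s in a..b, u1 s) / (∫ s in a..b, u0 s) * u0 t) :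
    ∫ t in a..b, u1 t * x t = (∫ t in a..b, u1 t) * (∫ t in a..b, u0 t)
      / ((∫ t in a..b, u0 t) + ∫ t in a..b, u1 t) := by
  set A0 := ∫ t in a..b, u0 t
  set A1 := ∫ t in a..b, u1 t
  have hprop : EqOn u1 (fun t => A1 / A0 * u0 t) (Icc a b) := by
    have := (show EqOn u1 (fun t => A1 / A0 * u0 t) (Ico a b) from h).closure hu1 (by fun_prop)
    rwa [closure_Ico hab.ne] at this
  have hout : ∫ t in a..b, u1 t * x t = A1 / A0 * ∫ t in a..b, u0 t * x t := by
    rw [← intervalIntegral.integral_const_mul]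
    refine integral_congr fun t ht => ?_
    rw [uIcc_of_le hab.le] at ht
    simp only [hprop ht]
    ring
  have hin : ∫ t in a..b, u0 t * (1 - x t) = A0 - ∫ t in a..b, u0 t * x t := by
    simp_rw [mul_one_sub]
    exact intervalIntegral.integral_sub (hu0.intervalIntegrable a b)
      ((hu0.mul hx.continuous).intervalIntegrable a b)
  have hbal := integral_mul_one_sub_eq_integral_mul hu0 hu1 hx hxab hode
  set C := ∫ t in a..b, u0 t * x t
  rw [hin, hout] at hbal
  have hC : C * (A0 + A1) = A0 * A0 := by
    field_simp at hbal
    linarith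
  rw [hout, div_mul_eq_mul_div, div_eq_div_iff hA0 hA]
  linear_combination A1 * hC

end PeriodicOrbit

theorem mul_mul_div_mul_add_mul {K : Type*} [Field K] (a b : K) {c : K} (hc : c ≠ 0) :
    c * a * (c * b) / (c * b + c * a) = c * (a * b / (b + a)) := by
  rw [← mul_add, mul_mul_mul_comm, mul_assoc, mul_div_mul_left _ _ hc, mul_div_assoc]

theorem rfm1_equality_iff_proportional_general
    (T : ℝ) (hT : 0 < T) (u0 u1 x1 : ℝ → ℝ)
    (hu0c : Continuous u0) (hu1c : Continuous u1)
    (hu0p : ∀ t, 0 < u0 t) (hu1p : ∀ t, 0 < u1 t)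
    (hx1d : Differentiable ℝ x1) (hx1per : ∀ t, x1 (t + T) = x1 t)
    (hx1mem : ∀ t, x1 t ∈ Set.Ioo (0:ℝ) 1)
    (hode : ∀ t, deriv x1 t = u0 t * (1 - x1 t) - u1 t * x1 t) :
    (1/T * ∫ t in (0:ℝ)..T, u1 t * x1 t)
      = (1/T * ∫ t in (0:ℝ)..T, u1 t) * (1/T * ∫ t in (0:ℝ)..T, u0 t)
          / ((1/T * ∫ t in (0:ℝ)..T, u0 t) + (1/T * ∫ t in (0:ℝ)..T, u1 t))
    ↔ ∀ t ∈ Set.Ico (0:ℝ) T,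
        u1 t = ((1/T * ∫ s in (0:ℝ)..T, u1 s) / (1/T * ∫ s in (0:ℝ)..T, u0 s)) * u0 t := by
  have hc : 1 / T ≠ 0 := one_div_ne_zero hT.ne'
  have hA0 : 0 < ∫ t in (0:ℝ)..T, u0 t :=
    intervalIntegral_pos_of_pos (hu0c.intervalIntegrable 0 T) hu0p hT
  have hA1 : 0 < ∫ t in (0:ℝ)..T, u1 t :=
    intervalIntegral_pos_of_pos (hu1c.intervalIntegrable 0 T) hu1p hT
  have hx1T : x1 0 = x1 T := by simpa using (hx1per 0).symm
  have hx1 : ∀ t, x1 t < 1 := fun t => (hx1mem t).2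
  rw [mul_mul_div_mul_add_mul _ _ hc, mul_right_inj' hc, mul_div_mul_left _ _ hc]
  exact ⟨eqOn_Ico_of_integral_mul_eq hT hu0c hu1c hA0 hu1p hx1d hx1T hx1 hode,
    integral_mul_eq_of_eqOn_Ico hT hu0c hu1c hA0.ne' (by positivity) hx1d hx1T hode⟩

theorem rfm1_equality_iff_proportional
    (T : ℝ) (hT : 0 < T) (u0 u1 x1 : ℝ → ℝ)
    (hu0c : Continuous u0) (hu1c : Continuous u1)
    (hu0p : ∀ t, 0 < u0 t) (hu1p : ∀ t, 0 < u1 t)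
    (hu0per : ∀ t, u0 (t + T) = u0 t) (hu1per : ∀ t, u1 (t + T) = u1 t)
    (hx1d : Differentiable ℝ x1) (hx1per : ∀ t, x1 (t + T) = x1 t)
    (hx1mem : ∀ t, x1 t ∈ Set.Ioo (0:ℝ) 1)
    (hode : ∀ t, deriv x1 t = u0 t * (1 - x1 t) - u1 t * x1 t) :
    (1/T * ∫ t in (0:ℝ)..T, u1 t * x1 t)
      = (1/T * ∫ t in (0:ℝ)..T, u1 t) * (1/T * ∫ t in (0:ℝ)..T, u0 t)
          / ((1/T * ∫ t in (0:ℝ)..T, u0 t) + (1/T * ∫ t in (0:ℝ)..T, u1 t))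
    ↔ ∀ t ∈ Set.Ico (0:ℝ) T,
        u1 t = ((1/T * ∫ s in (0:ℝ)..T, u1 s) / (1/T * ∫ s in (0:ℝ)..T, u0 s)) * u0 t :=
  rfm1_equality_iff_proportional_general T hT u0 u1 x1 hu0c hu1c hu0p hu1p hx1d hx1per hx1mem hode
end

section
/- Consider the RFM on n sites with continuous positive T-periodic rates and T-periodic solution x in (0,1)ⁿ, averaged equilibrium e, zᵢ = xᵢ - eᵢ, and moments η_{i,j} = (1/T)∫₀ᵀ uᵢ zⱼ dt. If η_{1,2} ≥ 0 or η_{n-1,n-1} ≤ 0, then there is no gain of entrainment: R_P ≤ R_C. -/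
/-!
Periodicity of each `xᵢ` makes all time-averaged fluxes `uᵢ xᵢ (1 - xᵢ₊₁)` equal, so `R_P`
is the average entry flux of `u₀ (1 - x₁)`, while the equilibrium equations telescope to
`R_C = ū₀ (1 - e₁)`. Periodicity of `log x₁` gives
`avg (u₀ (1 - x₁) / x₁) = avg (u₁ (1 - x₂))`, which is at most `ū₁ (1 - e₂)` when `η₁₂ ≥ 0`.
The pointwise bound
`1 - s ≤ (1 - e₁)² + e₁² (1 - s) / s`, i.e. `(s - e₁)² ≥ 0`, then yields
`avg (u₀ (1 - x₁)) ≤ (1 - e₁)² ū₀ + e₁² ū₁ (1 - e₂) = ū₀ (1 - e₁)`.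
The case `η_{n-1,n-1} ≤ 0` is the mirror image at the exit site, with `log (1 - xₙ)`.
-/

open MeasureTheory intervalIntegral Real Filter

theorem apply_zero_eq_of_forall_lt {α : Type*} {f : ℕ → α} {n : ℕ}
    (h : ∀ i < n, f i = f (i + 1)) : f 0 = f n := by
  induction n with
  | zero => rfl
  | succ n ih =>
    exact (ih fun i hi => h i (hi.trans n.lt_succ_self)).trans (h n n.lt_succ_self)

theorem integral_eq_of_hasDerivAt_sub {f g h : ℝ → ℝ} {a b : ℝ}
    (hf : ∀ t, HasDerivAt f (g t - h t) t) (hg : Continuous g) (hh : Continuous h)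
    (hper : f b = f a) : ∫ t in a..b, g t = ∫ t in a..b, h t := by
  have := integral_eq_sub_of_hasDerivAt (fun t _ => hf t) ((hg.sub hh).intervalIntegrable a b)
  rw [hper, sub_self,
    integral_sub (hg.intervalIntegrable a b) (hh.intervalIntegrable a b)] at this
  exact sub_eq_zero.mp this

-- The logarithmic derivative of `s` integrates to zero over a period.
theorem integral_div_eq_of_hasDerivAt {s f g : ℝ → ℝ} {a b : ℝ}
    (hs : ∀ t, HasDerivAt s (f t - s t * g t) t) (hs_pos : ∀ t, 0 < s t)
    (hf : Continuous f) (hg : Continuous g) (hper : s b = s a) :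
    ∫ t in a..b, f t / s t = ∫ t in a..b, g t := by
  have hsc : Continuous s := continuous_iff_continuousAt.2 fun t => (hs t).continuousAt
  refine integral_eq_of_hasDerivAt_sub (f := fun t => Real.log (s t)) (fun t => ?_)
    (hf.div hsc fun t => (hs_pos t).ne') hg (by rw [hper])
  convert (hs t).log (hs_pos t).ne' using 1
  field_simp [(hs_pos t).ne']

theorem le_sq_add_sq_mul_div {p q d d' : ℝ} (hp : 0 < p) (hpq : p + q = 1) (hd : d + d' = 1) :
    q ≤ d' ^ 2 + d ^ 2 * (q / p) := by
  obtain rfl : q = 1 - p := by linarith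
  obtain rfl : d' = 1 - d := by linarith
  have key : (1 - d) ^ 2 + d ^ 2 * ((1 - p) / p) - (1 - p) = (p - d) ^ 2 / p := by
    field_simp
    ring
  linarith [div_nonneg (sq_nonneg (p - d)) hp.le]

theorem integral_mul_le_of_integral_mul_div_le {α p q : ℝ → ℝ} {a b d d' W : ℝ} (hab : a ≤ b)
    (hα : Continuous α) (hα_nonneg : ∀ t, 0 ≤ α t) (hp : Continuous p) (hp_pos : ∀ t, 0 < p t)
    (hpq : ∀ t, p t + q t = 1) (hd : d + d' = 1)
    (hW : ∫ t in a..b, α t * q t / p t ≤ W) (hbal : d * W = d' * ∫ t in a..b, α t) :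
    ∫ t in a..b, α t * q t ≤ d' * ∫ t in a..b, α t := by
  have hq : Continuous q := by
    rw [show q = fun t => 1 - p t from funext fun t => eq_sub_of_add_eq' (hpq t)]
    fun_prop
  have hαqp : Continuous fun t => α t * q t / p t :=
    (hα.mul hq).div hp fun t => (hp_pos t).ne'
  have hpointwise : ∀ t, α t * q t ≤ d' ^ 2 * α t + d ^ 2 * (α t * q t / p t) := fun t => by
    have := mul_le_mul_of_nonneg_left (le_sq_add_sq_mul_div (hp_pos t) (hpq t) hd) (hα_nonneg t)
    rw [mul_div_assoc]
    linarith
  calc ∫ t in a..b, α t * q t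
      ≤ ∫ t in a..b, (d' ^ 2 * α t + d ^ 2 * (α t * q t / p t)) :=
        integral_mono_on hab ((hα.mul hq).intervalIntegrable a b)
          (((continuous_const.mul hα).add (continuous_const.mul hαqp)).intervalIntegrable a b)
          fun t _ => hpointwise t
    _ = d' ^ 2 * (∫ t in a..b, α t) + d ^ 2 * ∫ t in a..b, α t * q t / p t := by
        rw [integral_add (Continuous.intervalIntegrable (by fun_prop) a b)
          (Continuous.intervalIntegrable (by fun_prop) a b),
          intervalIntegral.integral_const_mul, intervalIntegral.integral_const_mul]
    _ ≤ d' ^ 2 * (∫ t in a..b, α t) + d ^ 2 * W := by gcongr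
    _ = d' * ∫ t in a..b, α t := by linear_combination d * hbal + (∫ t in a..b, α t) * d' * hd

theorem average_entry_flux_le_of_moment_nonneg {u₀ u₁ x₁ x₂ : ℝ → ℝ} {T e₁ e₂ : ℝ}
    (hT : 0 < T) (hu₀ : Continuous u₀) (hu₀_nonneg : ∀ t, 0 ≤ u₀ t) (hu₁ : Continuous u₁)
    (hx₂ : Continuous x₂) (hx₁_pos : ∀ t, 0 < x₁ t)
    (hx₁ : ∀ t, HasDerivAt x₁ (u₀ t * (1 - x₁ t) - u₁ t * x₁ t * (1 - x₂ t)) t)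
    (hper : x₁ T = x₁ 0)
    (hbal : (1 / T * ∫ t in 0..T, u₀ t) * (1 - e₁)
      = (1 / T * ∫ t in 0..T, u₁ t) * e₁ * (1 - e₂))
    (hη : 0 ≤ 1 / T * ∫ t in 0..T, u₁ t * (x₂ t - e₂)) :
    1 / T * ∫ t in 0..T, u₀ t * (1 - x₁ t) ≤ (1 / T * ∫ t in 0..T, u₀ t) * (1 - e₁) := by
  have hT' := one_div_pos.2 hT
  have hbal' : (∫ t in 0..T, u₀ t) * (1 - e₁) = (∫ t in 0..T, u₁ t) * e₁ * (1 - e₂) :=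
    mul_left_cancel₀ hT'.ne' (by linear_combination hbal)
  have hx₁c : Continuous x₁ := continuous_iff_continuousAt.2 fun t => (hx₁ t).continuousAt
  have hlog : ∫ t in 0..T, u₀ t * (1 - x₁ t) / x₁ t = ∫ t in 0..T, u₁ t * (1 - x₂ t) :=
    integral_div_eq_of_hasDerivAt (fun t => (hx₁ t).congr_deriv (by ring)) hx₁_pos
      (by fun_prop) (by fun_prop) hper
  have hmoment : ∫ t in 0..T, u₁ t * (1 - x₂ t)
      = (1 - e₂) * (∫ t in 0..T, u₁ t) - ∫ t in 0..T, u₁ t * (x₂ t - e₂) := by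
    rw [← intervalIntegral.integral_const_mul, ← intervalIntegral.integral_sub
      (Continuous.intervalIntegrable (by fun_prop) 0 T)
      (Continuous.intervalIntegrable (by fun_prop) 0 T)]
    exact integral_congr fun t _ => by ring
  have := integral_mul_le_of_integral_mul_div_le hT.le hu₀ hu₀_nonneg hx₁c hx₁_pos
    (fun t => add_sub_cancel _ _) (add_sub_cancel e₁ 1) (W := (1 - e₂) * ∫ t in 0..T, u₁ t)
    (by linarith [nonneg_of_mul_nonneg_right hη hT']) (by linear_combination -hbal')
  linarith [mul_le_mul_of_nonneg_left this hT'.le]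

theorem average_exit_flux_le_of_moment_nonpos {uₘ uₙ xₘ xₙ : ℝ → ℝ} {T eₘ eₙ : ℝ}
    (hT : 0 < T) (huₙ : Continuous uₙ) (huₙ_nonneg : ∀ t, 0 ≤ uₙ t) (huₘ : Continuous uₘ)
    (hxₘ : Continuous xₘ) (hxₙ_lt : ∀ t, xₙ t < 1)
    (hxₙ : ∀ t, HasDerivAt xₙ (uₘ t * xₘ t * (1 - xₙ t) - uₙ t * xₙ t) t)
    (hper : xₙ T = xₙ 0)
    (hbal : (1 / T * ∫ t in 0..T, uₘ t) * eₘ * (1 - eₙ) = (1 / T * ∫ t in 0..T, uₙ t) * eₙ)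
    (hη : 1 / T * ∫ t in 0..T, uₘ t * (xₘ t - eₘ) ≤ 0) :
    1 / T * ∫ t in 0..T, uₙ t * xₙ t ≤ (1 / T * ∫ t in 0..T, uₙ t) * eₙ := by
  have hT' := one_div_pos.2 hT
  have hbal' : (∫ t in 0..T, uₘ t) * eₘ * (1 - eₙ) = (∫ t in 0..T, uₙ t) * eₙ :=
    mul_left_cancel₀ hT'.ne' (by linear_combination hbal)
  have hxₙc : Continuous xₙ := continuous_iff_continuousAt.2 fun t => (hxₙ t).continuousAt
  have hlog : ∫ t in 0..T, uₙ t * xₙ t / (1 - xₙ t) = ∫ t in 0..T, uₘ t * xₘ t :=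
    integral_div_eq_of_hasDerivAt (s := fun t => 1 - xₙ t)
      (fun t => ((hxₙ t).const_sub 1).congr_deriv (by ring)) (fun t => sub_pos.2 (hxₙ_lt t))
      (by fun_prop) (by fun_prop) (by rw [hper])
  have hmoment : ∫ t in 0..T, uₘ t * xₘ t
      = eₘ * (∫ t in 0..T, uₘ t) + ∫ t in 0..T, uₘ t * (xₘ t - eₘ) := by
    rw [← intervalIntegral.integral_const_mul, ← intervalIntegral.integral_add
      (Continuous.intervalIntegrable (by fun_prop) 0 T)
      (Continuous.intervalIntegrable (by fun_prop) 0 T)]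
    exact integral_congr fun t _ => by ring
  have := integral_mul_le_of_integral_mul_div_le hT.le huₙ huₙ_nonneg (by fun_prop)
    (fun t => sub_pos.2 (hxₙ_lt t)) (fun t => sub_add_cancel _ _) (sub_add_cancel 1 eₙ)
    (W := eₘ * ∫ t in 0..T, uₘ t) (by linarith [nonpos_of_mul_nonpos_right hη hT'])
    (by linear_combination hbal')
  linarith [mul_le_mul_of_nonneg_left this hT'.le]

theorem integral_exit_flux_eq_integral_entry_flux {n : ℕ} {a b : ℝ} {u x : ℕ → ℝ → ℝ}
    (hu : ∀ i ≤ n, Continuous (u i)) (hx : ∀ i ≤ n + 1, Continuous (x i))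
    (hx0 : ∀ t, x 0 t = 1) (hxtop : ∀ t, x (n + 1) t = 0)
    (hderiv : ∀ i, 1 ≤ i → i ≤ n → ∀ t, HasDerivAt (x i)
      (u (i - 1) t * x (i - 1) t * (1 - x i t) - u i t * x i t * (1 - x (i + 1) t)) t)
    (hper : ∀ i, 1 ≤ i → i ≤ n → x i b = x i a) :
    ∫ t in a..b, u n t * x n t = ∫ t in a..b, u 0 t * (1 - x 1 t) := by
  have hflux : ∀ i ≤ n, Continuous fun t => u i t * x i t * (1 - x (i + 1) t) := fun i hi =>
    ((hu i hi).mul (hx i (by omega))).mul (continuous_const.sub (hx (i + 1) (by omega)))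
  have := apply_zero_eq_of_forall_lt
    (f := fun i => ∫ t in a..b, u i t * x i t * (1 - x (i + 1) t)) (n := n) fun i hi =>
      integral_eq_of_hasDerivAt_sub (by simpa using hderiv (i + 1) (by omega) hi)
        (hflux i hi.le) (hflux (i + 1) hi) (hper (i + 1) (by omega) hi)
  simpa [hx0, hxtop] using this.symm

theorem mul_eq_mul_one_sub_of_balance {n : ℕ} {r e : ℕ → ℝ} (he0 : e 0 = 1)
    (hetop : e (n + 1) = 0)
    (hbal : ∀ i, 1 ≤ i → i ≤ n →
      r (i - 1) * e (i - 1) * (1 - e i) = r i * e i * (1 - e (i + 1))) :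
    r n * e n = r 0 * (1 - e 1) := by
  have := apply_zero_eq_of_forall_lt (f := fun i => r i * e i * (1 - e (i + 1))) (n := n)
    fun i hi => by simpa using hbal (i + 1) (by omega) hi
  simpa [he0, hetop] using this.symm

theorem rfm_no_goe_of_moment_signs_general
    (n : ℕ) (hn : 1 ≤ n) (T : ℝ) (hT : 0 < T)
    (u : ℕ → ℝ → ℝ) (x : ℕ → ℝ → ℝ) (e : ℕ → ℝ)
    (hu_cont : ∀ i, i ≤ n → Continuous (u i))
    (hu_pos : ∀ i, i ≤ n → ∀ t, 0 < u i t)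
    (hx0 : ∀ t, x 0 t = 1) (hxtop : ∀ t, x (n+1) t = 0)
    (hxdiff : ∀ i, 1 ≤ i → i ≤ n → Differentiable ℝ (x i))
    (hxper : ∀ i, 1 ≤ i → i ≤ n → ∀ t, x i (t + T) = x i t)
    (hxmem : ∀ i, 1 ≤ i → i ≤ n → ∀ t, x i t ∈ Set.Ioo (0:ℝ) 1)
    (hode : ∀ i, 1 ≤ i → i ≤ n → ∀ t,
      deriv (x i) t
        = u (i-1) t * x (i-1) t * (1 - x i t) - u i t * x i t * (1 - x (i+1) t))
    (he0 : e 0 = 1) (hetop : e (n+1) = 0)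
    (heq : ∀ i, 1 ≤ i → i ≤ n →
      (1/T * ∫ t in (0:ℝ)..T, u (i-1) t) * e (i-1) * (1 - e i)
        = (1/T * ∫ t in (0:ℝ)..T, u i t) * e i * (1 - e (i+1)))
    (hsign : 0 ≤ 1/T * ∫ t in (0:ℝ)..T, u 1 t * (x 2 t - e 2)
      ∨ (1/T * ∫ t in (0:ℝ)..T, u (n-1) t * (x (n-1) t - e (n-1))) ≤ 0) :
    1/T * ∫ t in (0:ℝ)..T, u n t * x n t ≤ (1/T * ∫ t in (0:ℝ)..T, u n t) * e n := by
  have hxc : ∀ i ≤ n + 1, Continuous (x i) := by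
    intro i hi
    rcases Nat.eq_zero_or_pos i with rfl | hi0
    · rw [funext hx0]; exact continuous_const
    rcases hi.eq_or_lt with rfl | hlt
    · rw [funext hxtop]; exact continuous_const
    · exact (hxdiff i hi0 (by omega)).continuous
  have hderiv : ∀ i, 1 ≤ i → i ≤ n → ∀ t, HasDerivAt (x i)
      (u (i-1) t * x (i-1) t * (1 - x i t) - u i t * x i t * (1 - x (i+1) t)) t :=
    fun i h1 h2 t => hode i h1 h2 t ▸ (hxdiff i h1 h2 t).hasDerivAt
  have hper : ∀ i, 1 ≤ i → i ≤ n → x i T = x i 0 := fun i h1 h2 => by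
    simpa using hxper i h1 h2 0
  have hRC :=
    mul_eq_mul_one_sub_of_balance (r := fun i => 1/T * ∫ t in (0:ℝ)..T, u i t) he0 hetop heq
  rcases hsign with hη | hη
  · rw [integral_exit_flux_eq_integral_entry_flux hu_cont hxc hx0 hxtop hderiv hper, hRC]
    exact average_entry_flux_le_of_moment_nonneg hT (hu_cont 0 (Nat.zero_le n))
      (fun t => (hu_pos 0 (Nat.zero_le n) t).le) (hu_cont 1 hn) (hxc 2 (by omega))
      (fun t => (hxmem 1 le_rfl hn t).1) (fun t => by simpa [hx0] using hderiv 1 le_rfl hn t)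
      (hper 1 le_rfl hn) (by simpa [he0] using heq 1 le_rfl hn) hη
  · exact average_exit_flux_le_of_moment_nonpos hT (hu_cont n le_rfl)
      (fun t => (hu_pos n le_rfl t).le) (hu_cont (n - 1) (by omega)) (hxc (n - 1) (by omega))
      (fun t => (hxmem n hn le_rfl t).2) (fun t => by simpa [hxtop] using hderiv n hn le_rfl t)
      (hper n hn le_rfl) (by simpa [hetop] using heq n hn le_rfl) hη

theorem rfm_no_goe_of_moment_signs
    (n : ℕ) (hn : 1 ≤ n) (T : ℝ) (hT : 0 < T)
    (u : ℕ → ℝ → ℝ) (x : ℕ → ℝ → ℝ) (e : ℕ → ℝ)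
    (hu_cont : ∀ i, i ≤ n → Continuous (u i))
    (hu_pos : ∀ i, i ≤ n → ∀ t, 0 < u i t)
    (hu_per : ∀ i, i ≤ n → ∀ t, u i (t + T) = u i t)
    (hx0 : ∀ t, x 0 t = 1) (hxtop : ∀ t, x (n+1) t = 0)
    (hxdiff : ∀ i, 1 ≤ i → i ≤ n → Differentiable ℝ (x i))
    (hxper : ∀ i, 1 ≤ i → i ≤ n → ∀ t, x i (t + T) = x i t)
    (hxmem : ∀ i, 1 ≤ i → i ≤ n → ∀ t, x i t ∈ Set.Ioo (0:ℝ) 1)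
    (hode : ∀ i, 1 ≤ i → i ≤ n → ∀ t,
      deriv (x i) t
        = u (i-1) t * x (i-1) t * (1 - x i t) - u i t * x i t * (1 - x (i+1) t))
    (he0 : e 0 = 1) (hetop : e (n+1) = 0)
    (hemem : ∀ i, 1 ≤ i → i ≤ n → e i ∈ Set.Ioo (0:ℝ) 1)
    (heq : ∀ i, 1 ≤ i → i ≤ n →
      (1/T * ∫ t in (0:ℝ)..T, u (i-1) t) * e (i-1) * (1 - e i)
        = (1/T * ∫ t in (0:ℝ)..T, u i t) * e i * (1 - e (i+1)))
    (hsign : 0 ≤ 1/T * ∫ t in (0:ℝ)..T, u 1 t * (x 2 t - e 2)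
      ∨ (1/T * ∫ t in (0:ℝ)..T, u (n-1) t * (x (n-1) t - e (n-1))) ≤ 0) :
    1/T * ∫ t in (0:ℝ)..T, u n t * x n t ≤ (1/T * ∫ t in (0:ℝ)..T, u n t) * e n :=
  rfm_no_goe_of_moment_signs_general n hn T hT u x e hu_cont hu_pos hx0 hxtop hxdiff hxper hxmem
    hode he0 hetop heq hsign
end

section
/- Let n be odd, and consider the RFM in which all internal rates are constant, uᵢ(t) ≡ ūᵢ for i = 1,…,n-1, while u₀ and u_n are arbitrary continuous positive T-periodic functions. Then there is no gain of entrainment: R_P ≤ R_C. -/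
/-!
Suppose `R_P > R_C`. Integrating `ẋₖ`, `ẋₖ / xₖ` and `ẋₖ / (1 - xₖ)`, the derivatives of `xₖ`,
`log xₖ` and `-log (1 - xₖ)`, over a period gives three balance laws at every site. The first
says that all mean periodic fluxes agree, so each exceeds the common equilibrium flux. With
Cauchy–Schwarz the other two turn this excess into comparisons of the means `⟨xₖ⟩` with `eₖ`:
at the exit `⟨x_{n-1}⟩ > e_{n-1}`, at the entrance `⟨x₂⟩ < e₂` (for `n = 1` the entrance
estimate is already absurd), and two consecutive constant rates `u_j, u_{j+1}` carry
`⟨x_{j+2}⟩ > e_{j+2}` down to `⟨x_j⟩ > e_j`; this last step rests on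
`⟨h / y⟩⁻¹ + ⟨h / (1 - y)⟩⁻¹ ≤ ⟨h⟩⁻¹` for `h = x_{j+1} (1 - x_{j+2})` and `y = x_{j+1}`.
Since `n` is odd, `n - 1` is even and the descent from `n - 1` ends at `2`: contradiction.
-/

open intervalIntegral

section IntervalIntegral

variable {a b : ℝ}

lemma Continuous.intervalIntegral_pos {f : ℝ → ℝ} (hf : Continuous f) (hf0 : ∀ t, 0 < f t)
    (hab : a < b) : 0 < ∫ t in a..b, f t :=
  intervalIntegral_pos_of_pos (hf.intervalIntegrable a b) hf0 hab

lemma integral_mul_eq_of_forall_eq {u f : ℝ → ℝ} {c : ℝ} (hu : ∀ t, u t = c) :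
    ∫ t in a..b, u t * f t = c * ∫ t in a..b, f t := by
  simp only [hu, integral_const_mul]

lemma integral_one_sub {f : ℝ → ℝ} (hf : IntervalIntegrable f MeasureTheory.volume a b) :
    ∫ t in a..b, (1 - f t) = b - a - ∫ t in a..b, f t := by
  rw [integral_sub intervalIntegrable_const hf, integral_const, smul_eq_mul, mul_one]

lemma integral_eq_zero_of_hasDerivAt_of_eq_s12 {F f : ℝ → ℝ} (hF : ∀ t, HasDerivAt F (f t) t)
    (hf : Continuous f) (hFab : F a = F b) : ∫ t in a..b, f t = 0 := by
  rw [integral_eq_sub_of_hasDerivAt (fun t _ => hF t) (hf.intervalIntegrable a b), hFab, sub_self]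

lemma sq_integral_le_integral_mul_mul_integral_div (hab : a < b) {h φ : ℝ → ℝ}
    (hh : Continuous h) (hφ : Continuous φ) (hh0 : ∀ t, 0 < h t) (hφ0 : ∀ t, 0 < φ t) :
    (∫ t in a..b, h t) ^ 2 ≤ (∫ t in a..b, h t * φ t) * ∫ t in a..b, h t / φ t := by
  set A := ∫ t in a..b, h t * φ t
  set B := ∫ t in a..b, h t
  set C := ∫ t in a..b, h t / φ t
  have hq : Continuous fun t => h t / φ t := hh.div hφ fun t => (hφ0 t).ne'
  have hC : 0 < C := hq.intervalIntegral_pos (fun t => div_pos (hh0 t) (hφ0 t)) hab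
  -- `0 ≤ ∫ (h / φ) (C φ - B)²`, and the right-hand side expands to `C (C A - B²)`.
  have hsq : 0 ≤ ∫ t in a..b, C ^ 2 * (h t * φ t) - 2 * C * B * h t + B ^ 2 * (h t / φ t) := by
    refine integral_nonneg hab.le fun t _ => ?_
    have : C ^ 2 * (h t * φ t) - 2 * C * B * h t + B ^ 2 * (h t / φ t)
        = h t / φ t * (C * φ t - B) ^ 2 := by
      have := (hφ0 t).ne'
      field_simp
      ring
    rw [this]
    exact mul_nonneg (div_pos (hh0 t) (hφ0 t)).le (sq_nonneg _)
  rw [integral_add, integral_sub, integral_const_mul, integral_const_mul, integral_const_mul]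
    at hsq
  · nlinarith
  all_goals apply Continuous.intervalIntegrable; fun_prop (disch := exact fun t => (hφ0 t).ne')

lemma inv_integral_div_le (hab : a < b) {h φ : ℝ → ℝ}
    (hh : Continuous h) (hφ : Continuous φ) (hh0 : ∀ t, 0 < h t) (hφ0 : ∀ t, 0 < φ t) :
    (∫ t in a..b, h t / φ t)⁻¹ ≤ (∫ t in a..b, h t * φ t) / (∫ t in a..b, h t) ^ 2 := by
  have hq : Continuous fun t => h t / φ t := hh.div hφ fun t => (hφ0 t).ne'
  have hC := hq.intervalIntegral_pos (fun t => div_pos (hh0 t) (hφ0 t)) hab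
  have hB := hh.intervalIntegral_pos hh0 hab
  rw [inv_le_iff_one_le_mul₀' hC, ← mul_div_assoc, le_div_iff₀ (by positivity), one_mul,
    mul_comm]
  exact sq_integral_le_integral_mul_mul_integral_div hab hh hφ hh0 hφ0

lemma inv_integral_div_add_inv_integral_div_one_sub_le (hab : a < b) {h y : ℝ → ℝ}
    (hh : Continuous h) (hy : Continuous y) (hh0 : ∀ t, 0 < h t) (hy0 : ∀ t, 0 < y t)
    (hy1 : ∀ t, y t < 1) :
    (∫ t in a..b, h t / y t)⁻¹ + (∫ t in a..b, h t / (1 - y t))⁻¹ ≤ (∫ t in a..b, h t)⁻¹ := by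
  have hB := hh.intervalIntegral_pos hh0 hab
  have hsum : (∫ t in a..b, h t * y t) + ∫ t in a..b, h t * (1 - y t) = ∫ t in a..b, h t := by
    rw [← integral_add (Continuous.intervalIntegrable (by fun_prop) a b)
      (Continuous.intervalIntegrable (by fun_prop) a b)]
    exact integral_congr fun t _ => by ring
  calc (∫ t in a..b, h t / y t)⁻¹ + (∫ t in a..b, h t / (1 - y t))⁻¹
      ≤ (∫ t in a..b, h t * y t) / (∫ t in a..b, h t) ^ 2
        + (∫ t in a..b, h t * (1 - y t)) / (∫ t in a..b, h t) ^ 2 :=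
        add_le_add (inv_integral_div_le hab hh hy hh0 hy0)
          (inv_integral_div_le hab hh (continuous_const.sub hy) hh0 fun t => sub_pos.2 (hy1 t))
    _ = (∫ t in a..b, h t)⁻¹ := by
        rw [← add_div, hsum]
        field_simp

lemma mul_lt_one_sub_mul_integral_div_one_sub (hab : a < b) {h y : ℝ → ℝ}
    (hh : Continuous h) (hy : Continuous y) (hh0 : ∀ t, 0 < h t) (hy0 : ∀ t, 0 < y t)
    (hy1 : ∀ t, y t < 1) {m p : ℝ} (hp0 : 0 < p)
    (hl : m * p < ∫ t in a..b, h t) (hm : ∫ t in a..b, h t / y t < m) :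
    m * p < (1 - p) * ∫ t in a..b, h t / (1 - y t) := by
  have hM : 0 < ∫ t in a..b, h t / y t :=
    (hh.div hy fun t => (hy0 t).ne').intervalIntegral_pos (fun t => div_pos (hh0 t) (hy0 t)) hab
  have hR : 0 < ∫ t in a..b, h t / (1 - y t) :=
    (hh.div (continuous_const.sub hy) fun t => (sub_pos.2 (hy1 t)).ne').intervalIntegral_pos
      (fun t => div_pos (hh0 t) (sub_pos.2 (hy1 t))) hab
  have hm0 : 0 < m := hM.trans hm
  have hharm := inv_integral_div_add_inv_integral_div_one_sub_le hab hh hy hh0 hy0 hy1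
  have h1 := inv_strictAnti₀ (by positivity) hl
  have h2 := inv_strictAnti₀ hM hm
  have h3 : (∫ t in a..b, h t / (1 - y t))⁻¹ < (1 - p) / (m * p) := by
    calc _ < (m * p)⁻¹ - m⁻¹ := by linarith
      _ = (1 - p) / (m * p) := by field_simp
  rw [inv_lt_iff_one_lt_mul₀' hR, ← mul_div_assoc, one_lt_div (by positivity)] at h3
  linarith

lemma mul_integral_lt_one_sub_mul_integral_div_one_sub (hab : a < b) {u w : ℝ → ℝ}
    (hu : Continuous u) (hw : Continuous w) (hu0 : ∀ t, 0 < u t) (hw1 : ∀ t, w t < 1)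
    {c : ℝ} (h : c * ∫ t in a..b, u t < ∫ t in a..b, u t * w t) :
    c * ∫ t in a..b, u t < (1 - c) * ∫ t in a..b, u t * w t / (1 - w t) := by
  have hv0 : ∀ t, 0 < 1 - w t := fun t => sub_pos.2 (hw1 t)
  have hv : Continuous fun t => 1 - w t := by fun_prop
  have hk : Continuous fun t => u t / (1 - w t) := hu.div hv fun t => (hv0 t).ne'
  have hS := hu.intervalIntegral_pos hu0 hab
  have hK := hk.intervalIntegral_pos (fun t => div_pos (hu0 t) (hv0 t)) hab
  have hCS := sq_integral_le_integral_mul_mul_integral_div hab hu hv hu0 hv0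
  have hD_eq : ∫ t in a..b, u t * (1 - w t) = (∫ t in a..b, u t) - ∫ t in a..b, u t * w t := by
    simp only [mul_sub, mul_one]
    exact integral_sub (hu.intervalIntegrable a b) ((hu.mul hw).intervalIntegrable a b)
  have hK_eq : ∫ t in a..b, u t * w t / (1 - w t)
      = (∫ t in a..b, u t / (1 - w t)) - ∫ t in a..b, u t := by
    rw [← integral_sub (hk.intervalIntegrable a b) (hu.intervalIntegrable a b)]
    refine integral_congr fun t _ => ?_
    have := (hv0 t).ne'
    field_simp
    ring
  rw [hK_eq]
  rw [hD_eq] at hCS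
  -- `S² ≤ (S - ∫ u w) K < (1 - c) S K`, so `S < (1 - c) K`.
  nlinarith

section Site

variable {y p q : ℝ → ℝ}

lemma integral_mul_one_sub_eq_integral_mul_s12
    (hy : ∀ t, HasDerivAt y (p t * (1 - y t) - q t * y t) t)
    (hp : Continuous p) (hq : Continuous q) (hyab : y a = y b) :
    ∫ t in a..b, p t * (1 - y t) = ∫ t in a..b, q t * y t := by
  have hyc : Continuous y := continuous_iff_continuousAt.2 fun t => (hy t).continuousAt
  rw [← sub_eq_zero, ← integral_sub (Continuous.intervalIntegrable (by fun_prop) a b)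
    (Continuous.intervalIntegrable (by fun_prop) a b)]
  exact integral_eq_zero_of_hasDerivAt_of_eq_s12 hy (by fun_prop) hyab

lemma integral_mul_one_sub_div_eq_integral
    (hy : ∀ t, HasDerivAt y (p t * (1 - y t) - q t * y t) t)
    (hp : Continuous p) (hq : Continuous q) (hyab : y a = y b) (hy0 : ∀ t, 0 < y t) :
    ∫ t in a..b, p t * (1 - y t) / y t = ∫ t in a..b, q t := by
  have hyc : Continuous y := continuous_iff_continuousAt.2 fun t => (hy t).continuousAt
  have hy' : ∀ t, y t ≠ 0 := fun t => (hy0 t).ne'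
  have hr : Continuous fun t => p t * (1 - y t) / y t := by fun_prop (disch := exact hy')
  rw [← sub_eq_zero, ← integral_sub (hr.intervalIntegrable a b) (hq.intervalIntegrable a b)]
  refine integral_eq_zero_of_hasDerivAt_of_eq_s12 (F := fun t => Real.log (y t))
    (fun t => ?_) (by fun_prop) (by rw [hyab])
  refine ((hy t).log (hy' t)).congr_deriv ?_
  field_simp [hy' t]

lemma integral_eq_integral_mul_div_one_sub
    (hy : ∀ t, HasDerivAt y (p t * (1 - y t) - q t * y t) t)
    (hp : Continuous p) (hq : Continuous q) (hyab : y a = y b) (hy1 : ∀ t, y t < 1) :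
    ∫ t in a..b, p t = ∫ t in a..b, q t * y t / (1 - y t) := by
  have hyc : Continuous y := continuous_iff_continuousAt.2 fun t => (hy t).continuousAt
  have hy' : ∀ t, 1 - y t ≠ 0 := fun t => (sub_pos.2 (hy1 t)).ne'
  have hr : Continuous fun t => q t * y t / (1 - y t) := by fun_prop (disch := exact hy')
  rw [← sub_eq_zero, ← integral_sub (hp.intervalIntegrable a b) (hr.intervalIntegrable a b)]
  refine integral_eq_zero_of_hasDerivAt_of_eq_s12 (F := fun t => -Real.log (1 - y t))
    (fun t => ?_) (by fun_prop) (by rw [hyab])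
  refine (((hy t).const_sub 1).log (hy' t)).neg.congr_deriv ?_
  field_simp [hy' t]

end Site

end IntervalIntegral

noncomputable def timeAverage (T : ℝ) (f : ℝ → ℝ) : ℝ := 1 / T * ∫ t in (0:ℝ)..T, f t

lemma mul_timeAverage {T : ℝ} (hT : T ≠ 0) (f : ℝ → ℝ) :
    T * timeAverage T f = ∫ t in (0:ℝ)..T, f t := by
  rw [timeAverage]
  field_simp

lemma timeAverage_pos {T : ℝ} (hT : 0 < T) {f : ℝ → ℝ} (hf : Continuous f) (hf0 : ∀ t, 0 < f t) :
    0 < timeAverage T f :=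
  mul_pos (by positivity) (hf.intervalIntegral_pos hf0 hT)

structure IsPeriodicRFMSolution (n : ℕ) (T : ℝ) (u x : ℕ → ℝ → ℝ) : Prop where
  continuous_rate : ∀ i ≤ n, Continuous (u i)
  rate_pos : ∀ i ≤ n, ∀ t, 0 < u i t
  source : ∀ t, x 0 t = 1
  sink : ∀ t, x (n + 1) t = 0
  hasDerivAt : ∀ i, 1 ≤ i → i ≤ n → ∀ t, HasDerivAt (x i)
    (u (i - 1) t * x (i - 1) t * (1 - x i t) - u i t * x i t * (1 - x (i + 1) t)) t
  eq_at_period : ∀ i, 1 ≤ i → i ≤ n → x i 0 = x i T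
  mem_Ioo : ∀ i, 1 ≤ i → i ≤ n → ∀ t, x i t ∈ Set.Ioo 0 1

structure IsRFMEquilibrium (n : ℕ) (r e : ℕ → ℝ) : Prop where
  source : e 0 = 1
  sink : e (n + 1) = 0
  mem_Ioo : ∀ i, 1 ≤ i → i ≤ n → e i ∈ Set.Ioo 0 1
  balance : ∀ i, 1 ≤ i → i ≤ n → r (i - 1) * e (i - 1) * (1 - e i) = r i * e i * (1 - e (i + 1))

lemma IsRFMEquilibrium.flux_eq_output {n : ℕ} {r e : ℕ → ℝ} (he : IsRFMEquilibrium n r e) {k : ℕ}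
    (hk : k ≤ n) : r k * e k * (1 - e (k + 1)) = r n * e n := by
  induction hk using Nat.decreasingInduction with
  | self => rw [he.sink, sub_zero, mul_one]
  | of_succ k hk ih => rw [← ih, ← he.balance (k + 1) (by omega) hk, Nat.add_sub_cancel]

namespace IsPeriodicRFMSolution

variable {n k : ℕ} {T : ℝ} {u x : ℕ → ℝ → ℝ} {e : ℕ → ℝ}

lemma continuous (hx : IsPeriodicRFMSolution n T u x) (hk : k ≤ n + 1) : Continuous (x k) := by
  rcases Nat.eq_zero_or_pos k with rfl | hk0
  · rw [funext hx.source]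
    exact continuous_const
  rcases hk.lt_or_eq with hk | rfl
  · exact continuous_iff_continuousAt.2 fun t => (hx.hasDerivAt k hk0 (by omega) t).continuousAt
  · rw [funext hx.sink]
    exact continuous_const

lemma pos (hx : IsPeriodicRFMSolution n T u x) (hk : k ≤ n) (t : ℝ) : 0 < x k t := by
  rcases Nat.eq_zero_or_pos k with rfl | hk0
  · rw [hx.source]
    exact one_pos
  · exact (hx.mem_Ioo k hk0 hk t).1

lemma lt_one (hx : IsPeriodicRFMSolution n T u x) (hk0 : 1 ≤ k) (hk : k ≤ n + 1) (t : ℝ) :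
    x k t < 1 := by
  rcases hk.lt_or_eq with hk | rfl
  · exact (hx.mem_Ioo k hk0 (by omega) t).2
  · rw [hx.sink]
    exact one_pos

lemma hasDerivAt_site (hx : IsPeriodicRFMSolution n T u x) (hk0 : 1 ≤ k) (hk : k ≤ n) (t : ℝ) :
    HasDerivAt (x k)
      (u (k - 1) t * x (k - 1) t * (1 - x k t) - u k t * (1 - x (k + 1) t) * x k t) t :=
  (hx.hasDerivAt k hk0 hk t).congr_deriv (by ring)

lemma continuous_inflowRate (hx : IsPeriodicRFMSolution n T u x) (hk0 : 1 ≤ k) (hk : k ≤ n) :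
    Continuous fun t => u (k - 1) t * x (k - 1) t :=
  (hx.continuous_rate (k - 1) (by omega)).mul (hx.continuous (by omega))

lemma continuous_outflowRate (hx : IsPeriodicRFMSolution n T u x) (hk : k ≤ n) :
    Continuous fun t => u k t * (1 - x (k + 1) t) :=
  (hx.continuous_rate k hk).mul (continuous_const.sub (hx.continuous (by omega)))

lemma integral_flux_pred_eq (hx : IsPeriodicRFMSolution n T u x) (hk0 : 1 ≤ k) (hk : k ≤ n) :
    ∫ t in (0:ℝ)..T, u (k - 1) t * x (k - 1) t * (1 - x k t)
      = ∫ t in (0:ℝ)..T, u k t * x k t * (1 - x (k + 1) t) := by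
  rw [integral_mul_one_sub_eq_integral_mul_s12 (hx.hasDerivAt_site hk0 hk)
    (hx.continuous_inflowRate hk0 hk) (hx.continuous_outflowRate hk) (hx.eq_at_period k hk0 hk)]
  exact integral_congr fun t _ => by ring

lemma integral_flux_div_eq (hx : IsPeriodicRFMSolution n T u x) (hk0 : 1 ≤ k) (hk : k ≤ n) :
    ∫ t in (0:ℝ)..T, u (k - 1) t * x (k - 1) t * (1 - x k t) / x k t
      = ∫ t in (0:ℝ)..T, u k t * (1 - x (k + 1) t) :=
  integral_mul_one_sub_div_eq_integral (hx.hasDerivAt_site hk0 hk)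
    (hx.continuous_inflowRate hk0 hk) (hx.continuous_outflowRate hk) (hx.eq_at_period k hk0 hk)
    (hx.pos hk)

lemma integral_inflowRate_eq (hx : IsPeriodicRFMSolution n T u x) (hk0 : 1 ≤ k) (hk : k ≤ n) :
    ∫ t in (0:ℝ)..T, u (k - 1) t * x (k - 1) t
      = ∫ t in (0:ℝ)..T, u k t * x k t * (1 - x (k + 1) t) / (1 - x k t) := by
  rw [integral_eq_integral_mul_div_one_sub (hx.hasDerivAt_site hk0 hk)
    (hx.continuous_inflowRate hk0 hk) (hx.continuous_outflowRate hk) (hx.eq_at_period k hk0 hk)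
    (hx.lt_one hk0 (by omega))]
  exact integral_congr fun t _ => by ring

lemma integral_flux_eq_integral_output (hx : IsPeriodicRFMSolution n T u x) (hk : k ≤ n) :
    ∫ t in (0:ℝ)..T, u k t * x k t * (1 - x (k + 1) t) = ∫ t in (0:ℝ)..T, u n t * x n t := by
  induction hk using Nat.decreasingInduction with
  | self => simp only [hx.sink, sub_zero, mul_one]
  | of_succ k hk ih => rw [← ih, ← hx.integral_flux_pred_eq (k := k + 1) (by omega) hk,
      Nat.add_sub_cancel]

lemma mul_flux_lt_integral_flux (hx : IsPeriodicRFMSolution n T u x)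
    (he : IsRFMEquilibrium n (fun i => timeAverage T (u i)) e) (hT : 0 < T)
    (hgain : timeAverage T (u n) * e n < timeAverage T fun t => u n t * x n t) (hk : k ≤ n) :
    T * (timeAverage T (u k) * e k * (1 - e (k + 1)))
      < ∫ t in (0:ℝ)..T, u k t * x k t * (1 - x (k + 1) t) := by
  rw [he.flux_eq_output hk, hx.integral_flux_eq_integral_output hk, ← mul_timeAverage hT.ne']
  exact mul_lt_mul_of_pos_left hgain hT

lemma mul_lt_integral_mul_one_sub (hx : IsPeriodicRFMSolution n T u x)
    (he : IsRFMEquilibrium n (fun i => timeAverage T (u i)) e) (hT : 0 < T)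
    (hgain : timeAverage T (u n) * e n < timeAverage T fun t => u n t * x n t) (hk : k ≤ n)
    (hc : ∀ t, u k t = timeAverage T (u k)) :
    T * (e k * (1 - e (k + 1))) < ∫ t in (0:ℝ)..T, x k t * (1 - x (k + 1) t) := by
  have hflux := hx.mul_flux_lt_integral_flux he hT hgain hk
  simp only [mul_assoc] at hflux
  rw [integral_mul_eq_of_forall_eq hc] at hflux
  refine lt_of_mul_lt_mul_left ?_
    (timeAverage_pos hT (hx.continuous_rate k hk) (hx.rate_pos k hk)).le
  linear_combination hflux

lemma mul_lt_integral_pred (hx : IsPeriodicRFMSolution n T u x)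
    (he : IsRFMEquilibrium n (fun i => timeAverage T (u i)) e) (hT : 0 < T)
    (hgain : timeAverage T (u n) * e n < timeAverage T fun t => u n t * x n t) (hn : 2 ≤ n)
    (hc : ∀ t, u (n - 1) t = timeAverage T (u (n - 1))) :
    T * e (n - 1) < ∫ t in (0:ℝ)..T, x (n - 1) t := by
  have hn0 : 1 ≤ n := by omega
  have hflux := hx.mul_flux_lt_integral_flux he hT hgain le_rfl
  simp only [hx.sink, he.sink, sub_zero, mul_one] at hflux
  have hJ := mul_integral_lt_one_sub_mul_integral_div_one_sub hT (hx.continuous_rate n le_rfl)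
    (hx.continuous n.le_succ) (hx.rate_pos n le_rfl) (hx.lt_one hn0 n.le_succ) (c := e n)
    (by rw [← mul_timeAverage hT.ne']; linarith)
  have hL := hx.integral_inflowRate_eq hn0 le_rfl
  simp only [hx.sink, sub_zero, mul_one] at hL
  rw [← hL, integral_mul_eq_of_forall_eq hc, ← mul_timeAverage hT.ne'] at hJ
  have hb := he.balance n hn0 le_rfl
  rw [he.sink, sub_zero, mul_one] at hb
  have hpos : 0 < timeAverage T (u (n - 1)) * (1 - e n) :=
    mul_pos (timeAverage_pos hT (hx.continuous_rate _ (by omega)) (hx.rate_pos _ (by omega)))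
      (sub_pos.2 (he.mem_Ioo n hn0 le_rfl).2)
  refine lt_of_mul_lt_mul_left ?_ hpos.le
  linear_combination hJ + T * hb

lemma mul_lt_integral_rate_mul_one_sub (hx : IsPeriodicRFMSolution n T u x)
    (he : IsRFMEquilibrium n (fun i => timeAverage T (u i)) e) (hT : 0 < T)
    (hgain : timeAverage T (u n) * e n < timeAverage T fun t => u n t * x n t) (hn : 1 ≤ n) :
    T * (timeAverage T (u 1) * (1 - e 2)) < ∫ t in (0:ℝ)..T, u 1 t * (1 - x 2 t) := by
  have hflux := hx.mul_flux_lt_integral_flux he hT hgain n.zero_le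
  simp only [hx.source, he.source, mul_one, zero_add] at hflux
  have hJ := mul_integral_lt_one_sub_mul_integral_div_one_sub hT (hx.continuous_rate 0 n.zero_le)
    (w := fun t => 1 - x 1 t) (continuous_const.sub (hx.continuous (k := 1) (by omega)))
    (hx.rate_pos 0 n.zero_le)
    (fun t => sub_lt_self 1 (hx.pos hn t)) (c := 1 - e 1)
    (by rw [← mul_timeAverage hT.ne']; linarith)
  simp only [sub_sub_cancel] at hJ
  have hL := hx.integral_flux_div_eq le_rfl hn
  simp only [Nat.sub_self, hx.source, mul_one, one_add_one_eq_two] at hL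
  rw [hL, ← mul_timeAverage hT.ne'] at hJ
  have hb := he.balance 1 le_rfl hn
  simp only [Nat.sub_self, he.source, mul_one, one_add_one_eq_two] at hb
  refine lt_of_mul_lt_mul_left ?_ (he.mem_Ioo 1 le_rfl hn).1.le
  linear_combination hJ - T * hb

lemma integral_lt_mul_two (hx : IsPeriodicRFMSolution n T u x)
    (he : IsRFMEquilibrium n (fun i => timeAverage T (u i)) e) (hT : 0 < T)
    (hgain : timeAverage T (u n) * e n < timeAverage T fun t => u n t * x n t) (hn : 2 ≤ n)
    (hc : ∀ t, u 1 t = timeAverage T (u 1)) :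
    ∫ t in (0:ℝ)..T, x 2 t < T * e 2 := by
  have h := hx.mul_lt_integral_rate_mul_one_sub he hT hgain (by omega)
  rw [integral_mul_eq_of_forall_eq hc,
    integral_one_sub ((hx.continuous (by omega)).intervalIntegrable 0 T), sub_zero] at h
  refine lt_of_mul_lt_mul_left ?_
    (timeAverage_pos hT (hx.continuous_rate 1 (by omega)) (hx.rate_pos 1 (by omega))).le
  linear_combination h

lemma mul_lt_integral_of_mul_lt_integral_add_two (hx : IsPeriodicRFMSolution n T u x)
    (he : IsRFMEquilibrium n (fun i => timeAverage T (u i)) e) (hT : 0 < T)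
    (hgain : timeAverage T (u n) * e n < timeAverage T fun t => u n t * x n t)
    {j : ℕ} (hj : 1 ≤ j) (hjn : j + 2 ≤ n)
    (hc : ∀ t, u j t = timeAverage T (u j)) (hc' : ∀ t, u (j + 1) t = timeAverage T (u (j + 1)))
    (h : T * e (j + 2) < ∫ t in (0:ℝ)..T, x (j + 2) t) :
    T * e j < ∫ t in (0:ℝ)..T, x j t := by
  have hy := hx.continuous (k := j + 1) (by omega)
  have hz := hx.continuous (k := j + 2) (by omega)
  have hy0 := hx.pos (k := j + 1) (by omega)
  have hy1 := hx.lt_one (k := j + 1) (by omega) (by omega)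
  have hz1 := hx.lt_one (k := j + 2) (by omega) (by omega)
  have hh : Continuous fun t => x (j + 1) t * (1 - x (j + 2) t) := by fun_prop
  have hh0 : ∀ t, 0 < x (j + 1) t * (1 - x (j + 2) t) :=
    fun t => mul_pos (hy0 t) (sub_pos.2 (hz1 t))
  have he1 := he.mem_Ioo (j + 1) (by omega) (by omega)
  have hrate : 0 < timeAverage T (u (j + 1)) :=
    timeAverage_pos hT (hx.continuous_rate _ (by omega)) (hx.rate_pos _ (by omega))
  have hflux : T * (1 - e (j + 2)) * e (j + 1)
      < ∫ t in (0:ℝ)..T, x (j + 1) t * (1 - x (j + 2) t) := by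
    linear_combination hx.mul_lt_integral_mul_one_sub he hT hgain (k := j + 1) (by omega) hc'
  have hvac : ∫ t in (0:ℝ)..T, x (j + 1) t * (1 - x (j + 2) t) / x (j + 1) t
      < T * (1 - e (j + 2)) := by
    rw [integral_congr fun t _ => mul_div_cancel_left₀ _ (hy0 t).ne',
      integral_one_sub (hz.intervalIntegrable 0 T), sub_zero]
    linarith
  have key := mul_lt_mul_of_pos_left
    (mul_lt_one_sub_mul_integral_div_one_sub hT hh hy hh0 hy0 hy1 he1.1 hflux hvac) hrate
  have hL : timeAverage T (u j) * ∫ t in (0:ℝ)..T, x j t = timeAverage T (u (j + 1)) *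
      ∫ t in (0:ℝ)..T, x (j + 1) t * (1 - x (j + 2) t) / (1 - x (j + 1) t) := by
    rw [← integral_mul_eq_of_forall_eq hc, ← integral_const_mul]
    refine (hx.integral_inflowRate_eq (k := j + 1) (by omega) (by omega)).trans
      (integral_congr fun t _ => ?_)
    simp only [hc' t, add_assoc, one_add_one_eq_two]
    ring
  have hb := he.balance (j + 1) (by omega) (by omega)
  simp only [Nat.add_sub_cancel, add_assoc, one_add_one_eq_two] at hb
  have hpos : 0 < timeAverage T (u j) * (1 - e (j + 1)) :=
    mul_pos (timeAverage_pos hT (hx.continuous_rate _ (by omega)) (hx.rate_pos _ (by omega)))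
      (sub_pos.2 he1.2)
  refine lt_of_mul_lt_mul_left ?_ hpos.le
  linear_combination key + T * hb - (1 - e (j + 1)) * hL

lemma mul_lt_integral_of_mul_lt_integral_add_two_mul (hx : IsPeriodicRFMSolution n T u x)
    (he : IsRFMEquilibrium n (fun i => timeAverage T (u i)) e) (hT : 0 < T)
    (hgain : timeAverage T (u n) * e n < timeAverage T fun t => u n t * x n t)
    (hconst : ∀ i, 1 ≤ i → i ≤ n - 1 → ∀ t, u i t = timeAverage T (u i)) (m : ℕ) :
    ∀ j, 1 ≤ j → j + 2 * m < n → T * e (j + 2 * m) < ∫ t in (0:ℝ)..T, x (j + 2 * m) t →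
      T * e j < ∫ t in (0:ℝ)..T, x j t := by
  induction m with
  | zero => exact fun j _ _ h => h
  | succ m ih =>
    intro j hj hjm h
    rw [show j + 2 * (m + 1) = j + 2 + 2 * m by ring] at h
    exact hx.mul_lt_integral_of_mul_lt_integral_add_two he hT hgain hj (by omega)
      (hconst j hj (by omega)) (hconst (j + 1) (by omega) (by omega))
      (ih (j + 2) (by omega) (by omega) h)

end IsPeriodicRFMSolution

theorem rfm_no_goe_odd_constant_internal_general
    (n : ℕ) (T : ℝ) (hT : 0 < T)
    (u : ℕ → ℝ → ℝ) (x : ℕ → ℝ → ℝ) (e : ℕ → ℝ)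
    (hu_cont : ∀ i, i ≤ n → Continuous (u i))
    (hu_pos : ∀ i, i ≤ n → ∀ t, 0 < u i t)
    (hx0 : ∀ t, x 0 t = 1) (hxtop : ∀ t, x (n+1) t = 0)
    (hxdiff : ∀ i, 1 ≤ i → i ≤ n → Differentiable ℝ (x i))
    (hxper : ∀ i, 1 ≤ i → i ≤ n → ∀ t, x i (t + T) = x i t)
    (hxmem : ∀ i, 1 ≤ i → i ≤ n → ∀ t, x i t ∈ Set.Ioo (0:ℝ) 1)
    (hode : ∀ i, 1 ≤ i → i ≤ n → ∀ t,
      deriv (x i) t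
        = u (i-1) t * x (i-1) t * (1 - x i t) - u i t * x i t * (1 - x (i+1) t))
    (he0 : e 0 = 1) (hetop : e (n+1) = 0)
    (hemem : ∀ i, 1 ≤ i → i ≤ n → e i ∈ Set.Ioo (0:ℝ) 1)
    (heq : ∀ i, 1 ≤ i → i ≤ n →
      (1/T * ∫ t in (0:ℝ)..T, u (i-1) t) * e (i-1) * (1 - e i)
        = (1/T * ∫ t in (0:ℝ)..T, u i t) * e i * (1 - e (i+1)))
    (hodd : Odd n)
    (hconst : ∀ i, 1 ≤ i → i ≤ n - 1 →
      ∀ t, u i t = 1/T * ∫ s in (0:ℝ)..T, u i s) :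
    1/T * ∫ t in (0:ℝ)..T, u n t * x n t ≤ (1/T * ∫ t in (0:ℝ)..T, u n t) * e n := by
  have hx : IsPeriodicRFMSolution n T u x :=
    { continuous_rate := hu_cont, rate_pos := hu_pos, source := hx0, sink := hxtop,
      hasDerivAt := fun i hi hin t => hode i hi hin t ▸ (hxdiff i hi hin t).hasDerivAt,
      eq_at_period := fun i hi hin => by simpa using (hxper i hi hin 0).symm,
      mem_Ioo := hxmem }
  have he : IsRFMEquilibrium n (fun i => timeAverage T (u i)) e := ⟨he0, hetop, hemem, heq⟩
  by_contra! hgain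
  obtain ⟨m, rfl⟩ := hodd
  rcases m with _ | m
  · have h := hx.mul_lt_integral_rate_mul_one_sub he hT hgain le_rfl
    have hx2 : ∀ t, x 2 t = 0 := hxtop
    have he2 : e 2 = 0 := hetop
    simp only [hx2, he2, sub_zero, mul_one] at h
    exact (mul_timeAverage hT.ne' (u 1)).not_lt h
  · have htop := hx.mul_lt_integral_pred he hT hgain (by omega) (hconst _ (by omega) (by omega))
    rw [show 2 * (m + 1) + 1 - 1 = 2 + 2 * m by omega] at htop
    exact (hx.integral_lt_mul_two he hT hgain (by omega) (hconst 1 le_rfl (by omega))).not_gt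
      (hx.mul_lt_integral_of_mul_lt_integral_add_two_mul he hT hgain hconst m 2 one_le_two
        (by omega) htop)

theorem rfm_no_goe_odd_constant_internal
    (n : ℕ) (hn : 1 ≤ n) (T : ℝ) (hT : 0 < T)
    (u : ℕ → ℝ → ℝ) (x : ℕ → ℝ → ℝ) (e : ℕ → ℝ)
    (hu_cont : ∀ i, i ≤ n → Continuous (u i))
    (hu_pos : ∀ i, i ≤ n → ∀ t, 0 < u i t)
    (hu_per : ∀ i, i ≤ n → ∀ t, u i (t + T) = u i t)
    (hx0 : ∀ t, x 0 t = 1) (hxtop : ∀ t, x (n+1) t = 0)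
    (hxdiff : ∀ i, 1 ≤ i → i ≤ n → Differentiable ℝ (x i))
    (hxper : ∀ i, 1 ≤ i → i ≤ n → ∀ t, x i (t + T) = x i t)
    (hxmem : ∀ i, 1 ≤ i → i ≤ n → ∀ t, x i t ∈ Set.Ioo (0:ℝ) 1)
    (hode : ∀ i, 1 ≤ i → i ≤ n → ∀ t,
      deriv (x i) t
        = u (i-1) t * x (i-1) t * (1 - x i t) - u i t * x i t * (1 - x (i+1) t))
    (he0 : e 0 = 1) (hetop : e (n+1) = 0)
    (hemem : ∀ i, 1 ≤ i → i ≤ n → e i ∈ Set.Ioo (0:ℝ) 1)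
    (heq : ∀ i, 1 ≤ i → i ≤ n →
      (1/T * ∫ t in (0:ℝ)..T, u (i-1) t) * e (i-1) * (1 - e i)
        = (1/T * ∫ t in (0:ℝ)..T, u i t) * e i * (1 - e (i+1)))
    (hodd : Odd n)
    (hconst : ∀ i, 1 ≤ i → i ≤ n - 1 →
      ∀ t, u i t = 1/T * ∫ s in (0:ℝ)..T, u i s) :
    1/T * ∫ t in (0:ℝ)..T, u n t * x n t ≤ (1/T * ∫ t in (0:ℝ)..T, u n t) * e n :=
  rfm_no_goe_odd_constant_internal_general n T hT u x e hu_cont hu_pos hx0 hxtop hxdiff hxper hxmem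
    hode he0 hetop hemem heq hodd hconst
end
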